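/- arXiv:1110.3856 — 10 statements merged into one kernel-verified Lean document; each statement's English description precedes it below -/
import Mathlib

section
/- Let α and β be types, let μ be a probability mass function on α and ν a probability mass function on β, and let h : α → β → Prop be a decidable predicate such that p := Σ_{a,b} μ(a)·ν(b)·[h(a,b)] is strictly positive. Define the target probability mass function s on α × β by s(a,b) = μ(a)·ν(b)·[h(a,b)]/p. For a ∈ α set q(a) := Σ_b ν(b)·[h(a,b)], define the first-stage probability mass function x on α by x(a) = μ(a)·q(a)/p, and for each a with q(a) > 0 define the second-stage probability mass function y_a on β by y_a(b) = ν(b)·[h(a,b)]/q(a) (for a with q(a) = 0 let y_a be arbitrary). Then sampling a from x and then b from y_a produces the distribution s; that is, the probability mass function obtained by binding x with a ↦ (map of y_a under b ↦ (a,b)) equals s. -/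
open scoped ENNReal

theorem ENNReal.mul_div_mul_div_cancel (a b c : ℝ≥0∞) {d : ℝ≥0∞} (hd : d ≠ 0) (hd' : d ≠ ⊤) :
    a * d / c * (b / d) = a * b / c := by
  simp only [div_eq_mul_inv]
  calc a * d * c⁻¹ * (b * d⁻¹) = a * b * c⁻¹ * (d * d⁻¹) := by ring
    _ = a * b * c⁻¹ := by rw [ENNReal.mul_inv_cancel hd hd', mul_one]

namespace PMF

theorem bind_map_prodMk_apply {α β : Type*} (x : PMF α) (y : α → PMF β) (a : α) (b : β) :
    (x.bind fun a => (y a).map (Prod.mk a)) (a, b) = x a * y a b := by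
  classical
  rw [bind_apply, tsum_eq_single a]
  · rw [map_apply, tsum_eq_single b] <;> simp +contextual [eq_comm]
  · intro a' ha'
    simp [map_apply, Ne.symm ha']

theorem tsum_mul_ite_le_one {β : Type*} (ν : PMF β) (P : β → Prop) [DecidablePred P] :
    ∑' b, ν b * (if P b then 1 else 0) ≤ 1 :=
  (ENNReal.tsum_le_tsum fun b => by split_ifs <;> simp).trans_eq ν.tsum_coe

end PMF

theorem pdc_basic_lemma_general {α β : Type*} (μ : PMF α) (ν : PMF β) (h : α → β → Prop)
    [∀ a b, Decidable (h a b)]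
    (p : ℝ≥0∞)
    (q : α → ℝ≥0∞) (hq : ∀ a, q a = ∑' b, ν b * (if h a b then 1 else 0))
    (s : PMF (α × β))
    (hs : ∀ a b, s (a, b) = μ a * ν b * (if h a b then 1 else 0) / p)
    (x : PMF α) (hx : ∀ a, x a = μ a * q a / p)
    (y : α → PMF β)
    (hy : ∀ a, 0 < q a → ∀ b, y a b = ν b * (if h a b then 1 else 0) / q a) :
    x.bind (fun a => (y a).map (fun b => (a, b))) = s := by
  ext ⟨a, b⟩
  rw [PMF.bind_map_prodMk_apply, hs, hx]
  rcases eq_or_ne (q a) 0 with hqa | hqa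
  · have hab : ν b * (if h a b then 1 else 0) = 0 := ENNReal.tsum_eq_zero.mp (hq a ▸ hqa) b
    rw [hqa, mul_assoc, hab]
    simp
  · have hq_top : q a ≠ ⊤ :=
      hq a ▸ ne_top_of_le_ne_top ENNReal.one_ne_top (ν.tsum_mul_ite_le_one _)
    rw [hy a hqa.bot_lt b, ENNReal.mul_div_mul_div_cancel _ _ _ hqa hq_top, mul_assoc]

/-- **Probabilistic divide-and-conquer, basic lemma.**
Sampling `a` from the conditioned first marginal `x` and then `b` from the
conditional second-stage distribution `y a` produces the conditioned joint
distribution `s` of an independent pair `(A,B) ~ μ ⊗ ν` given `h (A, B)`. -/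
theorem pdc_basic_lemma {α β : Type*} (μ : PMF α) (ν : PMF β) (h : α → β → Prop)
    [∀ a b, Decidable (h a b)]
    (p : ℝ≥0∞) (hp : p = ∑' a, ∑' b, μ a * ν b * (if h a b then 1 else 0))
    (hppos : 0 < p)
    (q : α → ℝ≥0∞) (hq : ∀ a, q a = ∑' b, ν b * (if h a b then 1 else 0))
    (s : PMF (α × β))
    (hs : ∀ a b, s (a, b) = μ a * ν b * (if h a b then 1 else 0) / p)
    (x : PMF α) (hx : ∀ a, x a = μ a * q a / p)
    (y : α → PMF β)
    (hy : ∀ a, 0 < q a → ∀ b, y a b = ν b * (if h a b then 1 else 0) / q a) :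
    x.bind (fun a => (y a).map (fun b => (a, b))) = s :=
  pdc_basic_lemma_general μ ν h p q hq s hs x hx y hy
end

section
/- Fix x ∈ (0,1), and let μ_x be the product probability measure on ℕ^{ℕ≥1} whose i-th coordinate Z_i is geometric with parameter x^i, i.e. P(Z_i = k) = (1−x^i)·x^{ik} for k ∈ ℕ, with all coordinates independent. Then for every n ≥ 1 and every finitely supported function c : {1,2,3,…} → ℕ with Σ_{i≥1} i·c(i) = n, the μ_x-probability of the event {ω : ω(i) = c(i) for all i ≥ 1} equals x^n · ∏_{i=1}^∞ (1−x^i). In particular this probability is the same for every partition c of n, so conditional on Σ_i i·Z_i = n the induced random partition (with Z_i parts of size i) is uniform over the partitions of n. -/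
/-!
By independence of the coordinates and continuity of `μ` from above, the probability of the
cylinder `{ω | ∀ i, ω i = c i}` is the infinite product of its marginals
`(1 - x ^ i) * x ^ (i * c i)`. The factors `x ^ (i * c i)` differ from `1` only on the finite
support of `c` and multiply to `x ^ (∑ i * c i) = x ^ n`, while `∏ (1 - x ^ i)` converges because
`∑ x ^ i` does.
-/

open MeasureTheory ProbabilityTheory Filter Function

theorem ProbabilityTheory.iIndepFun.hasProd_measure_iInter_preimage
    {Ω ι : Type*} [MeasurableSpace Ω] {μ : Measure Ω} [IsFiniteMeasure μ] [Countable ι]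
    {κ : ι → Type*} [∀ i, MeasurableSpace (κ i)] {f : ∀ i, Ω → κ i}
    (hf : iIndepFun f μ) (hmeas : ∀ i, Measurable (f i)) {t : ∀ i, Set (κ i)}
    (ht : ∀ i, MeasurableSet (t i)) :
    HasProd (fun i ↦ μ (f i ⁻¹' t i)) (μ (⋂ i, f i ⁻¹' t i)) := by
  have hfinite (s : Finset ι) : μ (⋂ i ∈ s, f i ⁻¹' t i) = ∏ i ∈ s, μ (f i ⁻¹' t i) :=
    hf.meas_biInter fun i _ ↦ ⟨t i, ht i, rfl⟩
  have hcont := tendsto_measure_iInter_atTop (μ := μ)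
    (s := fun s : Finset ι ↦ ⋂ i ∈ s, f i ⁻¹' t i)
    (fun s ↦ (s.measurableSet_biInter fun i _ ↦ hmeas i (ht i)).nullMeasurableSet)
    (fun s s' hss' ↦ Set.biInter_subset_biInter_left hss') ⟨∅, measure_ne_top μ _⟩
  rw [← Set.iInter_eq_iInter_finset] at hcont
  simpa [HasProd, comp_def, hfinite] using hcont

theorem ENNReal.hasProd_ofReal_of_nonneg {ι : Type*} {f : ι → ℝ} {a : ℝ}
    (hf_nonneg : ∀ i, 0 ≤ f i) (hf : HasProd f a) :
    HasProd (fun i ↦ ENNReal.ofReal (f i)) (ENNReal.ofReal a) := by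
  have := (ENNReal.continuous_ofReal.tendsto a).comp hf
  simpa [HasProd, comp_def, ENNReal.ofReal_prod_of_nonneg fun i _ ↦ hf_nonneg i] using this

theorem hasProd_pow_finsum {ι M : Type*} [CommMonoid M] [TopologicalSpace M] (a : M)
    {w : ι → ℕ} (hw : (support w).Finite) : HasProd (fun i ↦ a ^ w i) (a ^ ∑ᶠ i, w i) := by
  rw [finsum_eq_sum w hw, ← Finset.prod_pow_eq_pow_sum]
  exact hasProd_prod_of_ne_finset_one fun i hi ↦ by simp_all

theorem Real.multipliable_one_sub_pow_subtype_pos {x : ℝ} (hx0 : 0 ≤ x) (hx1 : x < 1) :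
    Multipliable fun i : {i : ℕ // 0 < i} ↦ 1 - x ^ (i : ℕ) := by
  simpa [sub_eq_add_neg] using Real.multipliable_one_add_of_summable
    (f := fun i : {i : ℕ // 0 < i} ↦ -x ^ (i : ℕ))
    ((summable_geometric_of_lt_one hx0 hx1).subtype {i | 0 < i}).neg

theorem fristedt_cylinder_prob_general (x : ℝ) (hx : x ∈ Set.Ioo (0 : ℝ) 1)
    (μ : Measure ({i : ℕ // 0 < i} → ℕ)) [IsProbabilityMeasure μ]
    (hindep : iIndepFun (fun i ω => ω i) μ)
    (hmarg : ∀ (i : {i : ℕ // 0 < i}) (k : ℕ),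
      μ {ω | ω i = k} = ENNReal.ofReal ((1 - x ^ (i : ℕ)) * x ^ ((i : ℕ) * k)))
    (n : ℕ) (c : {i : ℕ // 0 < i} → ℕ)
    (hc : (Function.support c).Finite)
    (hsum : ∑ᶠ i : {i : ℕ // 0 < i}, i.1 * c i = n) :
    μ {ω | ∀ i, ω i = c i} =
      ENNReal.ofReal (x ^ n * ∏' i : {i : ℕ // 0 < i}, (1 - x ^ (i : ℕ))) := by
  obtain ⟨hx0, hx1⟩ := hx
  have hweight : HasProd (fun i : {i : ℕ // 0 < i} ↦ x ^ ((i : ℕ) * c i)) (x ^ n) :=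
    hsum ▸ hasProd_pow_finsum x (hc.subset (support_mul_subset_right _ _))
  have hmarginals := ENNReal.hasProd_ofReal_of_nonneg
    (fun i ↦ mul_nonneg (sub_nonneg.2 (pow_le_one₀ hx0.le hx1.le)) (pow_nonneg hx0.le _))
    ((Real.multipliable_one_sub_pow_subtype_pos hx0.le hx1).hasProd.mul hweight)
  have hcylinder := hindep.hasProd_measure_iInter_preimage measurable_pi_apply
    (t := fun i ↦ {c i}) fun i ↦ measurableSet_singleton _
  rw [Set.ofPred_forall, mul_comm]
  exact hcylinder.unique (by simpa [Set.preimage, hmarg] using hmarginals)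

/-- **Fristedt's observation.**  Let `μ` be the product probability measure on
`ℕ^{ℕ≥1}` whose `i`-th coordinate is geometric with parameter `x^i`
(i.e. the coordinates are independent with `P(Z_i = k) = (1 - x^i) x^{i k}`).
Then for every finitely supported `c : {i // 0 < i} → ℕ` encoding a partition of
`n` (i.e. `Σ i·c(i) = n`), the probability of the event `{ω | ∀ i, ω i = c i}`
equals `x^n · ∏_{i≥1} (1 - x^i)`, independently of the partition `c`. -/
theorem fristedt_cylinder_prob (x : ℝ) (hx : x ∈ Set.Ioo (0 : ℝ) 1)
    (μ : Measure ({i : ℕ // 0 < i} → ℕ)) [IsProbabilityMeasure μ]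
    (hindep : iIndepFun (fun i ω => ω i) μ)
    (hmarg : ∀ (i : {i : ℕ // 0 < i}) (k : ℕ),
      μ {ω | ω i = k} = ENNReal.ofReal ((1 - x ^ (i : ℕ)) * x ^ ((i : ℕ) * k)))
    (n : ℕ) (hn : 1 ≤ n) (c : {i : ℕ // 0 < i} → ℕ)
    (hc : (Function.support c).Finite)
    (hsum : ∑ᶠ i : {i : ℕ // 0 < i}, i.1 * c i = n) :
    μ {ω | ∀ i, ω i = c i} =
      ENNReal.ofReal (x ^ n * ∏' i : {i : ℕ // 0 < i}, (1 - x ^ (i : ℕ))) :=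
  fristedt_cylinder_prob_general x hx μ hindep hmarg n c hc hsum
end

section
/- Let c = π/√6 and for n ≥ 1 set x(n) = exp(−c/√n). Then, as n → ∞: (1/n)·Σ_{i=1}^∞ i·x(n)^i/(1 − x(n)^i) → 1, and (1/n^{3/2})·Σ_{i=1}^∞ i²·x(n)^i/(1 − x(n)^i)² → 2/c. Equivalently, for independent geometric random variables Z_i with parameter x(n)^i and T = Σ_i i·Z_i, one has E T ∼ n and Var T ∼ (2/c)·n^{3/2}, so the standard deviation of T is asymptotic to √(2/c)·n^{3/4}. -/
/-!
Put `t = c/√n`, so that `x(n) = e^{-t}`. Term by term, the two series are `t⁻²` and `t⁻³`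
times the right-endpoint Riemann sums `t ∑_{k ≥ 1} f(kt)` of the decreasing densities
`s/(eˢ - 1)` and `(s/2 / sinh(s/2))²` on `(0, ∞)`. For a decreasing function such a Riemann
sum lies between `∫_t^∞ f` and `∫_0^∞ f`, so it tends to `∫_0^∞ f` as `t → 0⁺`. Expanding
the densities into the series `∑_k s e^{-ks}` and `∑_k k s² e^{-ks}` and integrating term by
term gives `ζ(2) = π²/6` and `2 ζ(2) = π²/3`. Since `n t² = c² = π²/6`, the two limits are
`1` and `2/c`.
-/

open Filter Real

/-- The Fristedt tilt `x(n) = exp(-c/√n)` with `c = π/√6`. -/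
noncomputable def fristedtX (n : ℕ) : ℝ := Real.exp (-(Real.pi / Real.sqrt 6) / Real.sqrt n)

open Set MeasureTheory Topology
open scoped Nat

noncomputable def riemannSum (f : ℝ → ℝ) (t : ℝ) : ℝ := t * ∑' k : ℕ, f ((k + 1) * t)

section RiemannSum

variable {f : ℝ → ℝ}

lemma AntitoneOn.mul_le_intervalIntegral (hanti : AntitoneOn f (Ioi 0))
    (hint : IntegrableOn f (Ioi 0)) {t : ℝ} (ht : 0 < t) : t * f t ≤ ∫ s in (0)..t, f s := by
  rw [intervalIntegral.integral_of_le ht.le]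
  simpa [ht.le] using setIntegral_mono_on (μ := volume) (integrableOn_const (by simp))
    (hint.mono_set Ioc_subset_Ioi_self) measurableSet_Ioc
    fun s hs ↦ hanti hs.1 (mem_Ioi.2 ht) hs.2

lemma AntitoneOn.riemannSum_mem_Icc (hanti : AntitoneOn f (Ioi 0))
    (hf_nonneg : ∀ s ∈ Ioi 0, 0 ≤ f s) (hint : IntegrableOn f (Ioi 0)) {t : ℝ} (ht : 0 < t) :
    riemannSum f t ∈ Icc (∫ s in Ioi t, f s) (∫ s in Ioi 0, f s) := by
  set g : ℝ → ℝ := fun u ↦ f (t * u)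
  have hg_anti : AntitoneOn g (Ici ((1 : ℕ) : ℝ)) := fun u hu v hv huv ↦ by
    simp only [Nat.cast_one, mem_Ici] at hu hv
    exact hanti (mem_Ioi.2 (by nlinarith)) (mem_Ioi.2 (by nlinarith))
      (mul_le_mul_of_nonneg_left huv ht.le)
  have hg_nonneg : ∀ u ∈ Ioi ((1 : ℕ) : ℝ), 0 ≤ g u := fun u hu ↦ by
    simp only [Nat.cast_one, mem_Ioi] at hu
    exact hf_nonneg _ (mem_Ioi.2 (by nlinarith))
  have hg_int : IntegrableOn g (Ioi ((1 : ℕ) : ℝ)) := by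
    rw [integrableOn_Ioi_comp_mul_left_iff f _ ht]
    exact hint.mono_set (Ioi_subset_Ioi (by simpa using ht.le))
  have hg_integral : ∫ u in Ioi ((1 : ℕ) : ℝ), g u = t⁻¹ * ∫ s in Ioi t, f s := by
    simpa using integral_comp_mul_left_Ioi f 1 ht
  have hg_sum : Summable fun n : ℕ ↦ g n :=
    hg_anti.summable_of_integrableOn_Ioi hg_int hg_nonneg
  have hS : riemannSum f t = t * ∑' n : ℕ, g (n + 1 : ℕ) := by
    simp only [riemannSum, g]; push_cast; simp_rw [mul_comm t]
  have hlow := hg_anti.integral_le_tsum_comp_add 1 hg_sum hg_nonneg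
  have hup := hg_anti.tsum_comp_add_le_integral 1 hg_int hg_nonneg
  rw [hg_integral] at hlow hup
  constructor
  · rw [hS, ← inv_mul_le_iff₀ ht]
    convert hlow using 3
  · have hg1 : g ((0 + 1 : ℕ) : ℝ) = f t := by simp [g]
    have hup' := mul_le_mul_of_nonneg_left hup ht.le
    rw [← mul_assoc, mul_inv_cancel₀ ht.ne', one_mul] at hup'
    rw [hS, ((summable_nat_add_iff 1).2 hg_sum).tsum_eq_zero_add, hg1, mul_add,
      ← intervalIntegral.integral_interval_add_Ioi hint (hint.mono_set (Ioi_subset_Ioi ht.le))]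
    linarith [hanti.mul_le_intervalIntegral hint ht]

lemma tendsto_intervalIntegral_zero_nhdsGT (hint : IntegrableOn f (Ioi 0)) :
    Tendsto (fun t ↦ ∫ s in (0)..t, f s) (𝓝[>] 0) (𝓝 0) := by
  have hcont : ContinuousOn (fun t ↦ ∫ s in (0)..t, f s) (uIcc 0 1) := by
    refine intervalIntegral.continuousOn_primitive_interval ?_
    rw [uIcc_of_le zero_le_one, integrableOn_Icc_iff_integrableOn_Ioc]
    exact hint.mono_set Ioc_subset_Ioi_self
  have h0 := hcont 0 (by simp)
  rw [ContinuousWithinAt, intervalIntegral.integral_same] at h0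
  refine h0.mono_left (nhdsWithin_le_of_mem ?_)
  rw [uIcc_of_le zero_le_one]
  exact mem_of_superset (Ioo_mem_nhdsGT zero_lt_one) Ioo_subset_Icc_self

theorem AntitoneOn.tendsto_riemannSum (hanti : AntitoneOn f (Ioi 0))
    (hf_nonneg : ∀ s ∈ Ioi 0, 0 ≤ f s) (hint : IntegrableOn f (Ioi 0)) :
    Tendsto (riemannSum f) (𝓝[>] 0) (𝓝 (∫ s in Ioi 0, f s)) := by
  have htail : ∀ t ∈ Ioi (0 : ℝ),
      ∫ s in Ioi t, f s = (∫ s in Ioi 0, f s) - ∫ s in (0)..t, f s := fun t ht ↦ by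
    rw [← intervalIntegral.integral_Ioi_sub_Ioi hint (le_of_lt ht), sub_sub_cancel]
  have hlow : Tendsto (fun t ↦ (∫ s in Ioi 0, f s) - ∫ s in (0)..t, f s) (𝓝[>] 0)
      (𝓝 (∫ s in Ioi 0, f s)) := by
    simpa using tendsto_const_nhds.sub (tendsto_intervalIntegral_zero_nhdsGT hint)
  refine tendsto_of_tendsto_of_tendsto_of_le_of_le' hlow tendsto_const_nhds ?_ ?_ <;>
    filter_upwards [self_mem_nhdsWithin] with t ht
  · exact htail t ht ▸ (hanti.riemannSum_mem_Icc hf_nonneg hint ht).1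
  · exact (hanti.riemannSum_mem_Icc hf_nonneg hint ht).2

end RiemannSum

lemma integral_Ioi_pow_mul_exp_neg_mul (m : ℕ) {r : ℝ} (hr : 0 < r) :
    ∫ s in Ioi 0, s ^ m * exp (-(r * s)) = m ! / r ^ (m + 1) := by
  have h := integral_rpow_mul_exp_neg_mul_Ioi (a := m + 1) (by positivity) hr
  rw [add_sub_cancel_right, Real.Gamma_nat_eq_factorial, ← Nat.cast_succ, Real.rpow_natCast] at h
  simp_rw [Real.rpow_natCast] at h
  rw [h, one_div_pow, one_div, inv_mul_eq_div]

-- Integrability for free: a Bochner integral can only be nonzero for an integrable function.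
lemma integrableOn_pow_mul_exp_neg_mul (m : ℕ) {r : ℝ} (hr : 0 < r) :
    IntegrableOn (fun s ↦ s ^ m * exp (-(r * s))) (Ioi 0) :=
  Integrable.of_integral_ne_zero <| by
    rw [integral_Ioi_pow_mul_exp_neg_mul m hr]; positivity

lemma integral_Ioi_eq_tsum_of_hasSum {f : ℝ → ℝ} {a : ℕ → ℝ} (m : ℕ) (ha : ∀ k, 0 ≤ a k)
    (hsum : Summable fun k : ℕ ↦ a k / ((k : ℝ) + 1) ^ (m + 1))
    (hf : ∀ s ∈ Ioi (0 : ℝ),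
      HasSum (fun k : ℕ ↦ a k * (s ^ m * exp (-(((k : ℝ) + 1) * s)))) (f s)) :
    ∫ s in Ioi 0, f s = m ! * ∑' k, a k / ((k : ℝ) + 1) ^ (m + 1) := by
  set F : ℕ → ℝ → ℝ := fun k s ↦ a k * (s ^ m * exp (-(((k : ℝ) + 1) * s)))
  have hF : ∀ k, ∫ s in Ioi 0, F k s = m ! * (a k / ((k : ℝ) + 1) ^ (m + 1)) := fun k ↦ by
    rw [integral_const_mul, integral_Ioi_pow_mul_exp_neg_mul m (by positivity)]
    ring
  have hF_int : ∀ k, IntegrableOn (F k) (Ioi 0) := fun k ↦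
    (integrableOn_pow_mul_exp_neg_mul m (by positivity)).const_mul (a k)
  have hF_norm : ∀ k, ∫ s in Ioi 0, ‖F k s‖ = ∫ s in Ioi 0, F k s := fun k ↦
    setIntegral_congr_fun measurableSet_Ioi fun s hs ↦
      Real.norm_of_nonneg <|
        mul_nonneg (ha k) (mul_nonneg (pow_nonneg (mem_Ioi.1 hs).le m) (exp_pos _).le)
  rw [setIntegral_congr_fun measurableSet_Ioi fun s hs ↦ (hf s hs).tsum_eq.symm,
    ← integral_tsum_of_summable_integral_norm hF_int, ← tsum_mul_left]
  · exact tsum_congr hF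
  · simp_rw [hF_norm, hF]
    exact hsum.mul_left _

lemma hasSum_one_div_succ_sq : HasSum (fun k : ℕ ↦ 1 / ((k : ℝ) + 1) ^ 2) (π ^ 2 / 6) := by
  simpa using (hasSum_nat_add_iff' 1).2 hasSum_zeta_two

lemma ConvexOn.monotoneOn_div_self {g : ℝ → ℝ} (hg : ConvexOn ℝ (Ici 0) g) (h0 : g 0 = 0) :
    MonotoneOn (fun x ↦ g x / x) (Ioi 0) := fun x hx y hy hxy ↦ by
  simpa [h0] using hg.secant_mono self_mem_Ici (Ioi_subset_Ici_self hx)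
    (Ioi_subset_Ici_self hy) (ne_of_gt hx) (ne_of_gt hy) hxy

lemma ConvexOn.antitoneOn_self_div {g : ℝ → ℝ} (hg : ConvexOn ℝ (Ici 0) g) (h0 : g 0 = 0)
    (hpos : ∀ x ∈ Ioi (0 : ℝ), 0 < g x) : AntitoneOn (fun x ↦ x / g x) (Ioi 0) :=
  fun x hx y hy hxy ↦ by
    simp only [← inv_div (g _)]
    exact inv_anti₀ (div_pos (hpos x hx) hx) (hg.monotoneOn_div_self h0 hx hy hxy)

lemma convexOn_sinh_Ici : ConvexOn ℝ (Ici 0) sinh := by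
  refine MonotoneOn.convexOn_of_deriv (convex_Ici 0) continuous_sinh.continuousOn
    differentiable_sinh.differentiableOn ?_
  rw [Real.deriv_sinh, interior_Ici]
  intro x hx y hy hxy
  rw [cosh_le_cosh, abs_of_pos hx, abs_of_pos hy]
  exact hxy

noncomputable def meanDensity (s : ℝ) : ℝ := s * exp (-s) / (1 - exp (-s))

noncomputable def varianceDensity (s : ℝ) : ℝ := s ^ 2 * exp (-s) / (1 - exp (-s)) ^ 2

lemma exp_neg_succ_mul (k : ℕ) (s : ℝ) : exp (-(((k : ℝ) + 1) * s)) = exp (-s) ^ (k + 1) := by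
  rw [← exp_nat_mul]; push_cast; ring_nf

lemma hasSum_meanDensity {s : ℝ} (hs : 0 < s) :
    HasSum (fun k : ℕ ↦ s * exp (-(((k : ℝ) + 1) * s))) (meanDensity s) := by
  have hy : exp (-s) < 1 := exp_lt_one_iff.2 (neg_lt_zero.2 hs)
  have h := (hasSum_geometric_of_lt_one (exp_pos _).le hy).mul_left (s * exp (-s))
  simp_rw [exp_neg_succ_mul, pow_succ', ← mul_assoc]
  rwa [meanDensity, div_eq_mul_inv]

lemma hasSum_varianceDensity {s : ℝ} (hs : 0 < s) :
    HasSum (fun k : ℕ ↦ ((k : ℝ) + 1) * (s ^ 2 * exp (-(((k : ℝ) + 1) * s))))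
      (varianceDensity s) := by
  have hy : ‖exp (-s)‖ < 1 := by
    rw [norm_of_nonneg (exp_pos _).le]; exact exp_lt_one_iff.2 (neg_lt_zero.2 hs)
  have h := (hasSum_choose_mul_geometric_of_norm_lt_one 1 hy).mul_left (s ^ 2 * exp (-s))
  simp only [Nat.choose_one_right, Nat.cast_add, Nat.cast_one] at h
  convert! h using 1
  · ext k; rw [exp_neg_succ_mul, pow_succ']; ring
  · rw [varianceDensity]; ring

lemma integral_meanDensity : ∫ s in Ioi 0, meanDensity s = π ^ 2 / 6 := by
  rw [integral_Ioi_eq_tsum_of_hasSum 1 (a := fun _ ↦ 1) (fun _ ↦ zero_le_one)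
    hasSum_one_div_succ_sq.summable fun s hs ↦ by simpa using hasSum_meanDensity hs,
    hasSum_one_div_succ_sq.tsum_eq]
  simp

lemma integral_varianceDensity : ∫ s in Ioi 0, varianceDensity s = π ^ 2 / 3 := by
  have h : (fun k : ℕ ↦ ((k : ℝ) + 1) / ((k : ℝ) + 1) ^ (2 + 1)) =
      fun k : ℕ ↦ 1 / ((k : ℝ) + 1) ^ 2 := by
    ext k; field_simp
  rw [integral_Ioi_eq_tsum_of_hasSum 2 (fun k ↦ by positivity)
    (h ▸ hasSum_one_div_succ_sq.summable) fun s hs ↦ hasSum_varianceDensity hs, h,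
    hasSum_one_div_succ_sq.tsum_eq]
  norm_num [Nat.factorial]
  ring

lemma meanDensity_eq_div (s : ℝ) : meanDensity s = s / (exp s - 1) := by
  have h : 1 - (exp s)⁻¹ = (exp s - 1) * (exp s)⁻¹ := by field_simp
  rw [meanDensity, exp_neg, h, mul_div_mul_right _ _ (inv_ne_zero (exp_pos s).ne')]

lemma varianceDensity_eq_sq {s : ℝ} (hs : 0 < s) :
    varianceDensity s = (s / 2 / sinh (s / 2)) ^ 2 := by
  have he : exp (-(s / 2)) * exp (s / 2) = 1 := by rw [← exp_add]; simp
  have he2 : exp (-(s / 2)) * exp (-(s / 2)) = exp (-s) := by rw [← exp_add]; ring_nf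
  have hsub : 1 - exp (-s) = 2 * exp (-(s / 2)) * sinh (s / 2) := by
    rw [sinh_eq]; linear_combination he2 - he
  have hsinh : 0 < sinh (s / 2) := sinh_pos_iff.2 (by positivity)
  rw [varianceDensity, hsub, ← he2]
  field_simp

lemma antitoneOn_meanDensity : AntitoneOn meanDensity (Ioi 0) := by
  have hconv : ConvexOn ℝ (Ici 0) fun x ↦ exp x - 1 :=
    (convexOn_exp.subset (subset_univ _) (convex_Ici 0)).sub (concaveOn_const 1 (convex_Ici 0))
  simpa only [funext meanDensity_eq_div] using
    hconv.antitoneOn_self_div (by simp) fun x hx ↦ by simpa using hx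

lemma antitoneOn_varianceDensity : AntitoneOn varianceDensity (Ioi 0) := by
  have hanti := convexOn_sinh_Ici.antitoneOn_self_div sinh_zero fun x hx ↦ sinh_pos_iff.2 hx
  intro x hx y hy hxy
  have hx2 : x / 2 ∈ Ioi (0 : ℝ) := mem_Ioi.2 (half_pos hx)
  have hy2 : y / 2 ∈ Ioi (0 : ℝ) := mem_Ioi.2 (half_pos hy)
  rw [varianceDensity_eq_sq hx, varianceDensity_eq_sq hy]
  exact pow_le_pow_left₀ (div_pos hy2 (sinh_pos_iff.2 hy2)).le
    (hanti hx2 hy2 (by linarith)) 2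

lemma tendsto_riemannSum_meanDensity :
    Tendsto (riemannSum meanDensity) (𝓝[>] 0) (𝓝 (π ^ 2 / 6)) := by
  have hint : IntegrableOn meanDensity (Ioi 0) :=
    Integrable.of_integral_ne_zero (by rw [integral_meanDensity]; positivity)
  simpa [integral_meanDensity] using antitoneOn_meanDensity.tendsto_riemannSum
    (fun s hs ↦ (hasSum_meanDensity hs).nonneg fun _ ↦ mul_nonneg (mem_Ioi.1 hs).le (exp_pos _).le)
    hint

lemma tendsto_riemannSum_varianceDensity :
    Tendsto (riemannSum varianceDensity) (𝓝[>] 0) (𝓝 (π ^ 2 / 3)) := by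
  have hint : IntegrableOn varianceDensity (Ioi 0) :=
    Integrable.of_integral_ne_zero (by rw [integral_varianceDensity]; positivity)
  simpa [integral_varianceDensity] using antitoneOn_varianceDensity.tendsto_riemannSum
    (fun s hs ↦ (hasSum_varianceDensity hs).nonneg fun _ ↦ by positivity) hint

lemma tsum_mean_eq_riemannSum {t : ℝ} (ht : 0 < t) :
    ∑' i : ℕ, ((i : ℝ) + 1) * exp (-t) ^ (i + 1) / (1 - exp (-t) ^ (i + 1)) =
      riemannSum meanDensity t / t ^ 2 := by
  have hterm : ∀ i : ℕ, ((i : ℝ) + 1) * exp (-t) ^ (i + 1) / (1 - exp (-t) ^ (i + 1)) =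
      meanDensity (((i : ℝ) + 1) * t) / t := fun i ↦ by
    rw [meanDensity, exp_neg_succ_mul]; field_simp
  rw [tsum_congr hterm, tsum_div_const, riemannSum, sq, mul_div_mul_left _ _ ht.ne']

lemma tsum_variance_eq_riemannSum {t : ℝ} (ht : 0 < t) :
    ∑' i : ℕ, ((i : ℝ) + 1) ^ 2 * exp (-t) ^ (i + 1) / (1 - exp (-t) ^ (i + 1)) ^ 2 =
      riemannSum varianceDensity t / t ^ 3 := by
  have hterm : ∀ i : ℕ,
      ((i : ℝ) + 1) ^ 2 * exp (-t) ^ (i + 1) / (1 - exp (-t) ^ (i + 1)) ^ 2 =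
        varianceDensity (((i : ℝ) + 1) * t) / t ^ 2 := fun i ↦ by
    rw [varianceDensity, exp_neg_succ_mul]; field_simp
  rw [tsum_congr hterm, tsum_div_const, riemannSum, pow_succ' t 2, mul_div_mul_left _ _ ht.ne']

lemma tendsto_div_sqrt_nhdsGT_zero {c : ℝ} (hc : 0 < c) :
    Tendsto (fun n : ℕ ↦ c / √n) atTop (𝓝[>] 0) := by
  have hsqrt : Tendsto (fun n : ℕ ↦ √(n : ℝ)) atTop atTop :=
    tendsto_sqrt_atTop.comp tendsto_natCast_atTop_atTop
  refine tendsto_nhdsWithin_iff.2 ⟨tendsto_const_nhds.div_atTop hsqrt, ?_⟩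
  filter_upwards [eventually_ge_atTop 1] with n hn
  have : (0 : ℝ) < n := by exact_mod_cast hn
  exact mem_Ioi.2 (by positivity)

lemma tendsto_scaled_mean_sum {c : ℝ} (hc : 0 < c) :
    Tendsto (fun n : ℕ ↦ (1 / (n : ℝ)) * ∑' i : ℕ,
        ((i : ℝ) + 1) * exp (-(c / √n)) ^ (i + 1) / (1 - exp (-(c / √n)) ^ (i + 1)))
      atTop (𝓝 (π ^ 2 / 6 / c ^ 2)) := by
  rw [div_eq_inv_mul _ (c ^ 2)]
  refine ((tendsto_riemannSum_meanDensity.comp (tendsto_div_sqrt_nhdsGT_zero hc)).const_mul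
    (c ^ 2)⁻¹).congr' ?_
  filter_upwards [eventually_ge_atTop 1] with n hn
  have hn : (0 : ℝ) < n := by exact_mod_cast hn
  rw [Function.comp_apply, tsum_mean_eq_riemannSum (by positivity), div_pow, sq_sqrt hn.le]
  field_simp

lemma tendsto_scaled_variance_sum {c : ℝ} (hc : 0 < c) :
    Tendsto (fun n : ℕ ↦ (1 / (n : ℝ) ^ ((3 : ℝ) / 2)) * ∑' i : ℕ,
        ((i : ℝ) + 1) ^ 2 * exp (-(c / √n)) ^ (i + 1) / (1 - exp (-(c / √n)) ^ (i + 1)) ^ 2)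
      atTop (𝓝 (π ^ 2 / 3 / c ^ 3)) := by
  rw [div_eq_inv_mul _ (c ^ 3)]
  refine ((tendsto_riemannSum_varianceDensity.comp (tendsto_div_sqrt_nhdsGT_zero hc)).const_mul
    (c ^ 3)⁻¹).congr' ?_
  filter_upwards [eventually_ge_atTop 1] with n hn
  have hn : (0 : ℝ) < n := by exact_mod_cast hn
  have h32 : (n : ℝ) ^ ((3 : ℝ) / 2) = √n ^ 3 := by
    rw [sqrt_eq_rpow, ← rpow_natCast, ← rpow_mul hn.le]; norm_num
  rw [Function.comp_apply, tsum_variance_eq_riemannSum (by positivity), div_pow, h32]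
  field_simp

/-- **Mean and variance asymptotics of the Fristedt weighted sum.**
With `c = π/√6` and `x(n) = exp(-c/√n)`:
`(1/n)·Σ_{i≥1} i·x^i/(1-x^i) → 1` and
`(1/n^{3/2})·Σ_{i≥1} i²·x^i/(1-x^i)² → 2/c`,
i.e. `E T ∼ n` and `Var T ∼ (2/c)·n^{3/2}` for `T = Σ i·Z_i`. -/
theorem fristedt_mean_var_asymptotics :
    Tendsto (fun n : ℕ =>
        (1 / (n : ℝ)) * ∑' i : ℕ,
          ((i : ℝ) + 1) * fristedtX n ^ (i + 1) / (1 - fristedtX n ^ (i + 1)))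
      atTop (nhds 1) ∧
    Tendsto (fun n : ℕ =>
        (1 / (n : ℝ) ^ ((3 : ℝ) / 2)) * ∑' i : ℕ,
          ((i : ℝ) + 1) ^ 2 * fristedtX n ^ (i + 1) / (1 - fristedtX n ^ (i + 1)) ^ 2)
      atTop (nhds (2 / (Real.pi / Real.sqrt 6))) := by
  have hc : 0 < π / √6 := by positivity
  have hc2 : (π / √6) ^ 2 = π ^ 2 / 6 := by rw [div_pow, sq_sqrt (by norm_num)]
  simp only [fristedtX, neg_div]
  constructor
  · convert tendsto_scaled_mean_sum hc using 2
    rw [hc2, div_self (by positivity)]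
  · convert tendsto_scaled_variance_sum hc using 2
    rw [pow_succ (π / √6) 2, hc2]
    field_simp
    norm_num
end

section
/- Let (Ω, P) be a probability space carrying mutually independent random elements A_1, A_2, … (each with law μ on a measurable space α) and B_1, B_2, … (each with law ν on a measurable space β). Let h : α × β → {0,1} be measurable with p := E h(A_1, B_1) ∈ (0,1], let g : α × β → ℝ be bounded and measurable, and set E g(S) := E[g(A_1,B_1)·h(A_1,B_1)]/p. For m₁, m₂ ≥ 1 define G(m₁,m₂) = Σ_{1≤i≤m₁, 1≤j≤m₂} g(A_i,B_j)·h(A_i,B_j). Then: (a) E[G(m₁,m₂)] = m₁·m₂·p·E g(S) for all m₁, m₂ ≥ 1 (so G/(m₁m₂) is an unbiased estimator of p·E g(S)); and (b) G(m₁,m₂)/(m₁m₂) → p·E g(S) in probability as min(m₁,m₂) → ∞, i.e. for every ε > 0, P(|G(m₁,m₂)/(m₁m₂) − p·E g(S)| > ε) → 0. -/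
/-! Every summand `g(A_i,B_j) h(A_i,B_j)` has the law of `g h` under `μ ⊗ ν`, which gives (a) by
linearity. Two summands are independent as soon as they share neither an `A` nor a `B`, so in the
covariance expansion of `Var G(m₁,m₂)` only pairs in a common row or column of the `m₁ × m₂` grid
survive: at most `m₁ m₂ (m₁ + m₂)` of them, each bounded by `2 C²` when `|g| ≤ C`. Hence
`Var (G/(m₁m₂)) ≤ 2 C² (1/m₁ + 1/m₂)` and Chebyshev's inequality gives (b). -/

open MeasureTheory ProbabilityTheory Filter

universe u v

/-- The sequences `A` and `B` as one family indexed by `ℕ ⊕ ℕ`, so that the mutual independence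
of `A_1, A_2, …, B_1, B_2, …` is an `iIndepFun` statement. -/
def pdcSumFam (α β : Type u) : ℕ ⊕ ℕ → Type u := fun k => Sum.elim (fun _ => α) (fun _ => β) k

def pdcSumMS {α β : Type u} [mα : MeasurableSpace α] [mβ : MeasurableSpace β] :
    ∀ k, MeasurableSpace (pdcSumFam α β k)
  | .inl _ => mα
  | .inr _ => mβ

def pdcSumFun {Ω : Type v} {α β : Type u} (A : ℕ → Ω → α) (B : ℕ → Ω → β) :
    ∀ k, Ω → pdcSumFam α β k
  | .inl i => A i
  | .inr j => B j

open Finset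

section ArrayWeakLaw

variable {Ω : Type*} [MeasurableSpace Ω] {μ : Measure Ω}

lemma integral_sum_sum_eq {ι κ : Type*} (s : Finset ι) (t : Finset κ) {X : ι → κ → Ω → ℝ}
    {c : ℝ} (hX : ∀ i j, Integrable (X i j) μ) (hXc : ∀ i j, μ[X i j] = c) :
    ∫ ω, ∑ i ∈ s, ∑ j ∈ t, X i j ω ∂μ = #s * #t * c := by
  rw [integral_finsetSum _ fun i _ => integrable_finsetSum _ fun j _ => hX i j]
  simp_rw [integral_finsetSum _ fun j _ => hX _ j, hXc, Finset.sum_const, nsmul_eq_mul]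
  ring

variable [IsProbabilityMeasure μ]

lemma abs_integral_le_of_abs_le {X : Ω → ℝ} {C : ℝ} (hXC : ∀ᵐ ω ∂μ, |X ω| ≤ C) :
    |μ[X]| ≤ C := by
  simpa using norm_integral_le_of_norm_le_const (μ := μ) (f := X) hXC

lemma abs_covariance_le_of_abs_le {X Y : Ω → ℝ} {C : ℝ} (hX : AEStronglyMeasurable X μ)
    (hY : AEStronglyMeasurable Y μ) (hXC : ∀ᵐ ω ∂μ, |X ω| ≤ C) (hYC : ∀ᵐ ω ∂μ, |Y ω| ≤ C) :
    |cov[X, Y; μ]| ≤ 2 * C ^ 2 := by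
  rw [covariance_eq_sub (.of_bound hX C hXC) (.of_bound hY C hYC)]
  have hEX := abs_integral_le_of_abs_le hXC
  have hEY := abs_integral_le_of_abs_le hYC
  have hEXY : |μ[X * Y]| ≤ C ^ 2 := abs_integral_le_of_abs_le <| by
    filter_upwards [hXC, hYC] with ω hx hy
    rw [Pi.mul_apply, abs_mul, sq]
    exact mul_le_mul hx hy (abs_nonneg _) ((abs_nonneg _).trans hx)
  calc |μ[X * Y] - μ[X] * μ[Y]| ≤ |μ[X * Y]| + |μ[X]| * |μ[Y]| := by
        rw [← abs_mul]; exact abs_sub _ _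
    _ ≤ C ^ 2 + C * C := by gcongr; exact (abs_nonneg _).trans hEX
    _ = 2 * C ^ 2 := by ring

lemma variance_sum_le_of_indepFun {ι : Type*} (s : Finset ι) {X : ι → Ω → ℝ} {C : ℝ}
    (R : ι → ι → Prop) [DecidableRel R] {d : ℕ} (hX : ∀ i, AEStronglyMeasurable (X i) μ)
    (hXC : ∀ i, ∀ᵐ ω ∂μ, |X i ω| ≤ C) (hindep : ∀ i j, ¬ R i j → X i ⟂ᵢ[μ] X j)
    (hdeg : ∀ i ∈ s, #{j ∈ s | R i j} ≤ d) :
    Var[∑ i ∈ s, X i; μ] ≤ 2 * C ^ 2 * (#s * d) := by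
  have hX2 : ∀ i, MemLp (X i) 2 μ := fun i => .of_bound (hX i) C (hXC i)
  have hrow : ∀ i ∈ s, ∑ j ∈ s, cov[X i, X j; μ] ≤ 2 * C ^ 2 * d := fun i hi =>
    calc ∑ j ∈ s, cov[X i, X j; μ] ≤ ∑ j ∈ s, if R i j then 2 * C ^ 2 else 0 := by
          refine Finset.sum_le_sum fun j _ => ?_
          split_ifs with hij
          · exact (le_abs_self _).trans
              (abs_covariance_le_of_abs_le (hX i) (hX j) (hXC i) (hXC j))
          · exact ((hindep i j hij).covariance_eq_zero (hX2 i) (hX2 j)).le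
      _ = 2 * C ^ 2 * #{j ∈ s | R i j} := by
          rw [Finset.sum_ite, Finset.sum_const_zero, add_zero, Finset.sum_const, nsmul_eq_mul,
            mul_comm]
      _ ≤ 2 * C ^ 2 * d := by gcongr; exact hdeg i hi
  calc Var[∑ i ∈ s, X i; μ] = ∑ i ∈ s, ∑ j ∈ s, cov[X i, X j; μ] :=
        variance_sum' fun i _ => hX2 i
    _ ≤ ∑ _i ∈ s, 2 * C ^ 2 * d := Finset.sum_le_sum hrow
    _ = 2 * C ^ 2 * (#s * d) := by rw [Finset.sum_const, nsmul_eq_mul]; ring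

lemma card_filter_fst_eq_or_snd_eq {ι κ : Type*} [DecidableEq ι] [DecidableEq κ]
    {s : Finset ι} {t : Finset κ} {q : ι × κ} (hq : q ∈ s ×ˢ t) :
    #{r ∈ s ×ˢ t | q.1 = r.1 ∨ q.2 = r.2} ≤ #t + #s := by
  rw [Finset.filter_or]
  refine (Finset.card_union_le _ _).trans_eq ?_
  rw [Finset.mem_product] at hq
  rw [Finset.filter_product_left (q.1 = ·), Finset.filter_product_right (q.2 = ·),
    Finset.filter_eq, Finset.filter_eq, if_pos hq.1, if_pos hq.2]
  simp

lemma variance_sum_sum_le_of_indepFun {ι κ : Type*} (s : Finset ι) (t : Finset κ)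
    {X : ι → κ → Ω → ℝ} {C : ℝ} (hX : ∀ i j, AEStronglyMeasurable (X i j) μ)
    (hXC : ∀ i j, ∀ᵐ ω ∂μ, |X i j ω| ≤ C)
    (hindep : ∀ i j i' j', i ≠ i' → j ≠ j' → X i j ⟂ᵢ[μ] X i' j') :
    Var[fun ω => ∑ i ∈ s, ∑ j ∈ t, X i j ω; μ] ≤ 2 * C ^ 2 * (#s * #t * (#s + #t)) := by
  classical
  have hsum : (fun ω => ∑ i ∈ s, ∑ j ∈ t, X i j ω) = ∑ q ∈ s ×ˢ t, fun ω => X q.1 q.2 ω := by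
    ext ω
    rw [Finset.sum_apply, Finset.sum_product]
  have hvar := variance_sum_le_of_indepFun (s ×ˢ t) (X := fun q => X q.1 q.2) (μ := μ)
    (fun q r => q.1 = r.1 ∨ q.2 = r.2) (fun q => hX q.1 q.2) (fun q => hXC q.1 q.2)
    (fun q r hqr => by rw [not_or] at hqr; exact hindep _ _ _ _ hqr.1 hqr.2)
    (fun q hq => card_filter_fst_eq_or_snd_eq hq)
  rw [hsum]
  refine hvar.trans_eq ?_
  rw [Finset.card_product]
  push_cast
  ring

lemma measure_lt_abs_sum_sum_div_sub_le {ι κ : Type*} {s : Finset ι} {t : Finset κ}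
    (hs : s.Nonempty) (ht : t.Nonempty) {X : ι → κ → Ω → ℝ} {C c : ℝ}
    (hX : ∀ i j, AEStronglyMeasurable (X i j) μ) (hXC : ∀ i j, ∀ᵐ ω ∂μ, |X i j ω| ≤ C)
    (hXc : ∀ i j, μ[X i j] = c) (hindep : ∀ i j i' j', i ≠ i' → j ≠ j' → X i j ⟂ᵢ[μ] X i' j')
    {ε : ℝ} (hε : 0 < ε) :
    μ {ω | ε < |(∑ i ∈ s, ∑ j ∈ t, X i j ω) / (#s * #t) - c|}
      ≤ ENNReal.ofReal (2 * C ^ 2 / ε ^ 2 * (1 / #s + 1 / #t)) := by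
  set S := fun ω => ∑ i ∈ s, ∑ j ∈ t, X i j ω
  set n : ℝ := #s * #t
  have hs0 : (0 : ℝ) < #s := by exact_mod_cast hs.card_pos
  have ht0 : (0 : ℝ) < #t := by exact_mod_cast ht.card_pos
  have hn : 0 < n := mul_pos hs0 ht0
  have hX2 : ∀ i j, MemLp (X i j) 2 μ := fun i j => .of_bound (hX i j) C (hXC i j)
  have hS2 : MemLp S 2 μ :=
    memLp_finsetSum _ fun i _ => memLp_finsetSum _ fun j _ => hX2 i j
  have hmean : μ[fun ω => S ω * n⁻¹] = c := by
    rw [integral_mul_const, integral_sum_sum_eq s t (fun i j => (hX2 i j).integrable one_le_two)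
      hXc]
    simp only [n]
    field_simp
  have hvar : Var[fun ω => S ω * n⁻¹; μ] ≤ 2 * C ^ 2 * (#s + #t) / n := by
    rw [variance_mul_const, le_div_iff₀ hn]
    calc Var[S; μ] * n⁻¹ ^ 2 * n = Var[S; μ] / n := by field_simp
      _ ≤ 2 * C ^ 2 * (n * (#s + #t)) / n :=
          div_le_div_of_nonneg_right (variance_sum_sum_le_of_indepFun s t hX hXC hindep) hn.le
      _ = 2 * C ^ 2 * (#s + #t) := by field_simp
  calc μ {ω | ε < |S ω / n - c|}
      ≤ μ {ω | ε ≤ |S ω * n⁻¹ - μ[fun ω => S ω * n⁻¹]|} := by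
        refine measure_mono fun ω hω => ?_
        rw [Set.mem_ofPred_eq, hmean, ← div_eq_mul_inv]
        exact hω.le
    _ ≤ ENNReal.ofReal (Var[fun ω => S ω * n⁻¹; μ] / ε ^ 2) :=
        meas_ge_le_variance_div_sq (hS2.mul_const _) hε
    _ ≤ ENNReal.ofReal (2 * C ^ 2 / ε ^ 2 * (1 / #s + 1 / #t)) := by
        refine ENNReal.ofReal_le_ofReal ?_
        calc Var[fun ω => S ω * n⁻¹; μ] / ε ^ 2 ≤ 2 * C ^ 2 * (#s + #t) / n / ε ^ 2 := by
              gcongr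
          _ = 2 * C ^ 2 / ε ^ 2 * (1 / #s + 1 / #t) := by field_simp [n]; ring

theorem tendsto_measure_lt_abs_sum_sum_div_sub {X : ℕ → ℕ → Ω → ℝ} {C c : ℝ}
    (hX : ∀ i j, AEStronglyMeasurable (X i j) μ) (hXC : ∀ i j, ∀ᵐ ω ∂μ, |X i j ω| ≤ C)
    (hXc : ∀ i j, μ[X i j] = c) (hindep : ∀ i j i' j', i ≠ i' → j ≠ j' → X i j ⟂ᵢ[μ] X i' j')
    {ε : ℝ} (hε : 0 < ε) :
    Tendsto (fun m : ℕ × ℕ =>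
        μ {ω | ε < |(∑ i ∈ range m.1, ∑ j ∈ range m.2, X i j ω) / (m.1 * m.2) - c|})
      atTop (nhds 0) := by
  have hbound : Tendsto (fun m : ℕ × ℕ =>
      ENNReal.ofReal (2 * C ^ 2 / ε ^ 2 * (1 / m.1 + 1 / m.2))) atTop (nhds 0) := by
    have h₁ : Tendsto (fun m : ℕ × ℕ => 1 / (m.1 : ℝ)) atTop (nhds 0) := by
      rw [← prod_atTop_atTop_eq]
      exact tendsto_one_div_atTop_nhds_zero_nat.comp tendsto_fst
    have h₂ : Tendsto (fun m : ℕ × ℕ => 1 / (m.2 : ℝ)) atTop (nhds 0) := by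
      rw [← prod_atTop_atTop_eq]
      exact tendsto_one_div_atTop_nhds_zero_nat.comp tendsto_snd
    simpa using ENNReal.tendsto_ofReal ((h₁.add h₂).const_mul (2 * C ^ 2 / ε ^ 2))
  refine tendsto_of_tendsto_of_tendsto_of_le_of_le' tendsto_const_nhds hbound
    (Eventually.of_forall fun _ => zero_le) ?_
  filter_upwards [eventually_ge_atTop ((1, 1) : ℕ × ℕ)] with m hm
  simpa only [Finset.card_range] using measure_lt_abs_sum_sum_div_sub_le
    (nonempty_range_iff.2 (Nat.pos_iff_ne_zero.1 hm.1))
    (nonempty_range_iff.2 (Nat.pos_iff_ne_zero.1 hm.2))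
    hX hXC hXc hindep hε

end ArrayWeakLaw

section TwoSamples

variable {Ω : Type v} {α β : Type u} [MeasurableSpace Ω] [MeasurableSpace α] [MeasurableSpace β]
  {P : Measure Ω} {A : ℕ → Ω → α} {B : ℕ → Ω → β}

lemma measurable_pdcSumFun (hAm : ∀ i, Measurable (A i)) (hBm : ∀ j, Measurable (B j)) :
    ∀ k, Measurable[_, pdcSumMS k] (pdcSumFun A B k)
  | .inl i => hAm i
  | .inr j => hBm j

lemma map_prodMk_eq_prod_of_iIndepFun [IsFiniteMeasure P] {μ : Measure α} {ν : Measure β}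
    (hAm : ∀ i, Measurable (A i)) (hBm : ∀ j, Measurable (B j))
    (hindep : iIndepFun (m := pdcSumMS) (pdcSumFun A B) P)
    (hA : ∀ i, P.map (A i) = μ) (hB : ∀ j, P.map (B j) = ν) (i j : ℕ) :
    P.map (fun ω => (A i ω, B j ω)) = μ.prod ν := by
  have hij : A i ⟂ᵢ[P] B j := hindep.indepFun (i := .inl i) (j := .inr j) Sum.inl_ne_inr
  rw [(indepFun_iff_map_prod_eq_prod_map_map (hAm i).aemeasurable (hBm j).aemeasurable).1 hij,
    hA i, hB j]

lemma indepFun_prodMk_prodMk_of_iIndepFun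
    (hAm : ∀ i, Measurable (A i)) (hBm : ∀ j, Measurable (B j))
    (hindep : iIndepFun (m := pdcSumMS) (pdcSumFun A B) P) {i i' j j' : ℕ}
    (hi : i ≠ i') (hj : j ≠ j') :
    (fun ω => (A i ω, B j ω)) ⟂ᵢ[P] (fun ω => (A i' ω, B j' ω)) :=
  hindep.indepFun_prodMk_prodMk (measurable_pdcSumFun hAm hBm) (.inl i) (.inr j) (.inl i')
    (.inr j') (by simp [hi]) Sum.inl_ne_inr Sum.inr_ne_inl (by simp [hj])

end TwoSamples

theorem opportunistic_unbiased_and_consistent_general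
    {Ω : Type v} {α β : Type u} [MeasurableSpace Ω] [MeasurableSpace α] [MeasurableSpace β]
    (P : Measure Ω) [IsProbabilityMeasure P]
    (μ : Measure α) (ν : Measure β)
    (A : ℕ → Ω → α) (B : ℕ → Ω → β)
    (hAm : ∀ i, Measurable (A i)) (hBm : ∀ j, Measurable (B j))
    (hindep : iIndepFun (m := pdcSumMS) (pdcSumFun A B) P)
    (hA : ∀ i, P.map (A i) = μ) (hB : ∀ j, P.map (B j) = ν)
    (h : α × β → ℝ) (hh01 : ∀ z, h z = 0 ∨ h z = 1) (hhm : Measurable h)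
    (g : α × β → ℝ) (hgm : Measurable g) (hgb : ∃ C, ∀ z, |g z| ≤ C)
    (p : ℝ) (hp' : p ∈ Set.Ioc (0 : ℝ) 1)
    (EgS : ℝ) (hEgS : EgS = (∫ ω, g (A 0 ω, B 0 ω) * h (A 0 ω, B 0 ω) ∂P) / p)
    (G : ℕ → ℕ → Ω → ℝ)
    (hG : ∀ m₁ m₂ ω, G m₁ m₂ ω =
      ∑ i ∈ Finset.range m₁, ∑ j ∈ Finset.range m₂,
        g (A i ω, B j ω) * h (A i ω, B j ω)) :
    (∀ m₁ m₂ : ℕ, 1 ≤ m₁ → 1 ≤ m₂ →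
      ∫ ω, G m₁ m₂ ω ∂P = m₁ * m₂ * p * EgS) ∧
    (∀ ε > (0 : ℝ),
      Tendsto (fun m : ℕ × ℕ =>
          P {ω | ε < |G m.1 m.2 ω / (m.1 * m.2) - p * EgS|})
        atTop (nhds 0)) := by
  obtain ⟨C, hgC⟩ := hgb
  obtain rfl : G = fun m₁ m₂ ω => ∑ i ∈ range m₁, ∑ j ∈ range m₂,
      g (A i ω, B j ω) * h (A i ω, B j ω) := funext₃ hG
  have hFm : Measurable fun z => g z * h z := hgm.mul hhm
  have hFC (z : α × β) : |g z * h z| ≤ C := by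
    rcases hh01 z with hz | hz <;> simp [hz, (abs_nonneg _).trans (hgC z), hgC z]
  have hXm (i j : ℕ) : AEStronglyMeasurable (fun ω => g (A i ω, B j ω) * h (A i ω, B j ω)) P :=
    (hFm.comp ((hAm i).prodMk (hBm j))).aestronglyMeasurable
  have hXC (i j : ℕ) : ∀ᵐ ω ∂P, |g (A i ω, B j ω) * h (A i ω, B j ω)| ≤ C :=
    ae_of_all _ fun _ => hFC _
  have hlaw (i j : ℕ) : ∫ ω, g (A i ω, B j ω) * h (A i ω, B j ω) ∂P
      = ∫ z, g z * h z ∂(μ.prod ν) := by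
    rw [← map_prodMk_eq_prod_of_iIndepFun hAm hBm hindep hA hB i j,
      integral_map ((hAm i).prodMk (hBm j)).aemeasurable hFm.aestronglyMeasurable]
  have hXc (i j : ℕ) : ∫ ω, g (A i ω, B j ω) * h (A i ω, B j ω) ∂P = p * EgS := by
    rw [hEgS, mul_div_cancel₀ _ hp'.1.ne', hlaw, hlaw]
  have hXindep (i j i' j' : ℕ) (hi : i ≠ i') (hj : j ≠ j') :
      (fun ω => g (A i ω, B j ω) * h (A i ω, B j ω)) ⟂ᵢ[P]
        (fun ω => g (A i' ω, B j' ω) * h (A i' ω, B j' ω)) :=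
    (indepFun_prodMk_prodMk_of_iIndepFun hAm hBm hindep hi hj).comp hFm hFm
  refine ⟨fun m₁ m₂ _ _ => ?_, fun ε hε => ?_⟩
  · rw [integral_sum_sum_eq _ _ (fun i j => .of_bound (hXm i j) C (hXC i j)) hXc]
    simp [mul_assoc]
  · exact tendsto_measure_lt_abs_sum_sum_div_sub hXm hXC hXc hXindep hε

/-- **Unbiasedness and consistency of the opportunistic estimator `G/(m₁m₂)`.**
Given mutually independent i.i.d. sequences `A_i ~ μ` and `B_j ~ ν`, a
measurable indicator `h` with `p = E h(A,B) ∈ (0,1]`, a bounded measurable `g`,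
and `E g(S) = E[g(A,B)h(A,B)]/p`, the total score
`G(m₁,m₂) = Σ_{i<m₁, j<m₂} g(A_i,B_j)h(A_i,B_j)` satisfies
`E G(m₁,m₂) = m₁·m₂·p·E g(S)` and `G(m₁,m₂)/(m₁m₂) → p·E g(S)` in probability
as `min(m₁,m₂) → ∞`. -/
theorem opportunistic_unbiased_and_consistent
    {Ω : Type v} {α β : Type u} [MeasurableSpace Ω] [MeasurableSpace α] [MeasurableSpace β]
    (P : Measure Ω) [IsProbabilityMeasure P]
    (μ : Measure α) (ν : Measure β)
    (A : ℕ → Ω → α) (B : ℕ → Ω → β)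
    (hAm : ∀ i, Measurable (A i)) (hBm : ∀ j, Measurable (B j))
    (hindep : iIndepFun (m := pdcSumMS) (pdcSumFun A B) P)
    (hA : ∀ i, P.map (A i) = μ) (hB : ∀ j, P.map (B j) = ν)
    (h : α × β → ℝ) (hh01 : ∀ z, h z = 0 ∨ h z = 1) (hhm : Measurable h)
    (g : α × β → ℝ) (hgm : Measurable g) (hgb : ∃ C, ∀ z, |g z| ≤ C)
    (p : ℝ) (hp : p = ∫ ω, h (A 0 ω, B 0 ω) ∂P) (hp' : p ∈ Set.Ioc (0 : ℝ) 1)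
    (EgS : ℝ) (hEgS : EgS = (∫ ω, g (A 0 ω, B 0 ω) * h (A 0 ω, B 0 ω) ∂P) / p)
    (G : ℕ → ℕ → Ω → ℝ)
    (hG : ∀ m₁ m₂ ω, G m₁ m₂ ω =
      ∑ i ∈ Finset.range m₁, ∑ j ∈ Finset.range m₂,
        g (A i ω, B j ω) * h (A i ω, B j ω)) :
    (∀ m₁ m₂ : ℕ, 1 ≤ m₁ → 1 ≤ m₂ →
      ∫ ω, G m₁ m₂ ω ∂P = m₁ * m₂ * p * EgS) ∧
    (∀ ε > (0 : ℝ),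
      Tendsto (fun m : ℕ × ℕ =>
          P {ω | ε < |G m.1 m.2 ω / (m.1 * m.2) - p * EgS|})
        atTop (nhds 0)) :=
  opportunistic_unbiased_and_consistent_general P μ ν A B hAm hBm hindep hA hB h hh01 hhm g hgm hgb
    p hp' EgS hEgS G hG
end

section
/- For every n ≥ 0, p_n = Σ_{m=0}^{⌊n/2⌋} q_{n−2m} · p_m, where p_j denotes the number of partitions of j and q_j denotes the number of partitions of j into distinct parts (with p_0 = q_0 = 1). -/
/-!
Write each multiplicity `c` of a part as `c % 2 + 2 * (c / 2)`. The parts with `c % 2 = 1` form a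
partition into distinct parts, and the parts taken `c / 2` times form a partition `μ`, so every
partition `λ` of `n` splits uniquely as a distinct-parts partition of `n - 2m` plus two copies of a
partition `μ` of `m`. Counting partitions of `n` by the weight `m` of `μ` gives the identity.
-/

namespace Multiset

variable {α : Type*} [DecidableEq α]

def parityPart (s : Multiset α) : Multiset α :=
  s.dedup.filter fun a => Odd (s.count a)

noncomputable def halfPart (s : Multiset α) : Multiset α :=
  (s.toFinsupp.mapRange (· / 2) (Nat.zero_div 2)).toMultiset

theorem count_parityPart (s : Multiset α) (a : α) : (parityPart s).count a = s.count a % 2 := by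
  rw [parityPart, count_filter]
  rcases Nat.even_or_odd (s.count a) with h | h
  · simp [Nat.not_odd_iff_even.2 h, Nat.even_iff.1 h]
  · have ha : a ∈ s := count_pos.1 h.pos
    simp [h, ha, Nat.odd_iff.1 h]

theorem count_halfPart (s : Multiset α) (a : α) : (halfPart s).count a = s.count a / 2 := by
  simp [halfPart, Finsupp.count_toMultiset, Finsupp.mapRange_apply]

theorem nodup_parityPart (s : Multiset α) : (parityPart s).Nodup :=
  s.nodup_dedup.filter _

theorem parityPart_le (s : Multiset α) : parityPart s ≤ s :=
  (filter_le _ _).trans (dedup_le s)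

theorem halfPart_le (s : Multiset α) : halfPart s ≤ s :=
  le_iff_count.2 fun a => count_halfPart s a ▸ Nat.div_le_self _ _

theorem parityPart_add_two_nsmul_halfPart (s : Multiset α) :
    parityPart s + 2 • halfPart s = s := by
  ext a
  simp only [count_add, count_nsmul, count_parityPart, count_halfPart]
  omega

theorem parityPart_add_two_nsmul {d : Multiset α} (hd : d.Nodup) (h : Multiset α) :
    parityPart (d + 2 • h) = d := by
  ext a
  have := nodup_iff_count_le_one.1 hd a
  simp only [count_parityPart, count_add, count_nsmul]
  omega

theorem halfPart_add_two_nsmul {d : Multiset α} (hd : d.Nodup) (h : Multiset α) :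
    halfPart (d + 2 • h) = h := by
  ext a
  have := nodup_iff_count_le_one.1 hd a
  simp only [count_halfPart, count_add, count_nsmul]
  omega

theorem sum_parityPart_add_two_nsmul_sum_halfPart {M : Type*} [AddCommMonoid M] [DecidableEq M]
    (s : Multiset M) : (parityPart s).sum + 2 • (halfPart s).sum = s.sum := by
  conv_rhs => rw [← parityPart_add_two_nsmul_halfPart s]
  rw [sum_add, sum_nsmul]

end Multiset

namespace Nat.Partition

open Multiset

theorem two_mul_sum_halfPart_le {n : ℕ} (p : n.Partition) : 2 * (halfPart p.parts).sum ≤ n := by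
  have := sum_parityPart_add_two_nsmul_sum_halfPart p.parts
  rw [p.parts_sum, smul_eq_mul] at this
  omega

noncomputable def halfPartSumFiberEquiv {n m : ℕ} (hm : 2 * m ≤ n) :
    {p : n.Partition // (halfPart p.parts).sum = m} ≃
      {q : (n - 2 * m).Partition // q.parts.Nodup} × m.Partition where
  toFun p :=
    (⟨⟨parityPart p.1.parts, fun hi => p.1.parts_pos (subset_of_le (parityPart_le _) hi), by
        have := sum_parityPart_add_two_nsmul_sum_halfPart p.1.parts
        rw [p.2, p.1.parts_sum, smul_eq_mul] at this
        omega⟩, nodup_parityPart _⟩,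
      ⟨halfPart p.1.parts, fun hi => p.1.parts_pos (subset_of_le (halfPart_le _) hi), p.2⟩)
  invFun dh :=
    ⟨⟨dh.1.1.parts + 2 • dh.2.parts, by
        intro i hi
        rcases mem_add.1 hi with hi | hi
        · exact dh.1.1.parts_pos hi
        · exact dh.2.parts_pos (mem_of_mem_nsmul hi), by
        rw [sum_add, sum_nsmul, dh.1.1.parts_sum, dh.2.parts_sum, smul_eq_mul]
        omega⟩, by
      rw [halfPart_add_two_nsmul dh.1.2, dh.2.parts_sum]⟩
  left_inv p := Subtype.ext <| Nat.Partition.ext <| parityPart_add_two_nsmul_halfPart p.1.parts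
  right_inv dh := Prod.ext (Subtype.ext <| Nat.Partition.ext <| parityPart_add_two_nsmul dh.1.2 _)
    (Nat.Partition.ext <| halfPart_add_two_nsmul dh.1.2 _)

end Nat.Partition

/-- **Coefficient identity of `p(z) = d(z)·p(z²)`.**
For every `n`, the number of partitions of `n` equals
`Σ_{m=0}^{⌊n/2⌋} q_{n−2m} · p_m`, where `p_j` is the number of partitions of `j`
and `q_j` is the number of partitions of `j` into distinct parts. -/
theorem partition_count_eq_sum_distinct_mul_partition (n : ℕ) :
    Fintype.card (Nat.Partition n) =
      ∑ m ∈ Finset.range (n / 2 + 1),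
        Fintype.card {q : Nat.Partition (n - 2 * m) // q.parts.Nodup} *
          Fintype.card (Nat.Partition m) := by
  classical
  have hmaps : ∀ p : n.Partition, (Multiset.halfPart p.parts).sum ∈ Finset.range (n / 2 + 1) := fun p =>
    Finset.mem_range.2 (by have := p.two_mul_sum_halfPart_le; omega)
  rw [← Finset.card_univ, Finset.card_eq_sum_card_fiberwise fun p _ => hmaps p]
  refine Finset.sum_congr rfl fun m hm => ?_
  have h2m : 2 * m ≤ n := by rw [Finset.mem_range] at hm; omega
  rw [← Fintype.card_subtype, Fintype.card_congr (Nat.Partition.halfPartSumFiberEquiv h2m),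
    Fintype.card_prod]
end

section
/- Let y ∈ (0,1) and let Z be a geometric random variable with P(Z = k) = (1−y)·y^k for k ∈ ℕ. Then the pair (Z mod 2, Z div 2) has the following joint distribution: Z mod 2 is Bernoulli with P(Z mod 2 = 1) = y/(1+y) and P(Z mod 2 = 0) = 1/(1+y); Z div 2 is geometric with parameter y², i.e. P(Z div 2 = m) = (1−y²)·(y²)^m; and Z mod 2 and Z div 2 are independent. Equivalently, for every e ∈ {0,1} and m ∈ ℕ, (1−y)·y^{e+2m} = (y^e/(1+y)) · (1−y²)·(y²)^m. -/
/-!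
Writing `k = e + 2m` with `e ∈ {0, 1}`, the geometric weight factors as
`(1 - y) y^(e + 2m) = y^e / (1 + y) · (1 - y²) (y²)^m` because `(1 - y)(1 + y) = 1 - y²`.
Since `k ↦ (k % 2, k / 2)` is injective, this is the joint law of the pair; it is a product of
two probability weights, so it is also the product of its marginals.
-/

open scoped ENNReal

namespace PMF

variable {α β : Type*}

theorem map_apply_of_injective {f : α → β} (p : PMF α) (hf : Function.Injective f) (a : α) :
    p.map f (f a) = p a := by
  rw [map_apply, tsum_eq_single a fun a' ha' => if_neg fun h => ha' (hf h).symm, if_pos rfl]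

theorem map_apply_eq_zero_of_notMem_range {f : α → β} (p : PMF α) {b : β}
    (hb : b ∉ Set.range f) : p.map f b = 0 := by
  rw [apply_eq_zero_iff, support_map]
  exact fun ⟨a, _, ha⟩ => hb ⟨a, ha⟩

theorem map_fst_apply (q : PMF (α × β)) (a : α) : q.map Prod.fst a = ∑' b, q (a, b) := by
  rw [map_apply, ENNReal.tsum_prod', tsum_eq_single a]
  · simp
  · intro a' ha'
    simp [Ne.symm ha']

theorem map_snd_apply (q : PMF (α × β)) (b : β) : q.map Prod.snd b = ∑' a, q (a, b) := by
  rw [map_apply, ENNReal.tsum_prod', ENNReal.tsum_comm, tsum_eq_single b]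
  · simp
  · intro b' hb'
    simp [Ne.symm hb']

theorem map_mod_two_div_two_apply (Z : PMF ℕ) (e m : ℕ) :
    Z.map (fun k => (k % 2, k / 2)) (e, m) = if e < 2 then Z (e + 2 * m) else 0 := by
  split_ifs with he
  · have hinj : Function.Injective fun k : ℕ => (k % 2, k / 2) := fun a b hab => by
      simp only [Prod.mk.injEq] at hab
      omega
    convert Z.map_apply_of_injective hinj (e + 2 * m) using 2
    simp only [Prod.mk.injEq]
    omega
  · refine Z.map_apply_eq_zero_of_notMem_range ?_
    rintro ⟨k, hk⟩
    simp only [Prod.mk.injEq] at hk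
    omega

end PMF

theorem one_sub_mul_pow_add_two_mul {y : ℝ} (hy : 1 + y ≠ 0) (e m : ℕ) :
    (1 - y) * y ^ (e + 2 * m) = y ^ e / (1 + y) * ((1 - y ^ 2) * (y ^ 2) ^ m) := by
  field_simp
  ring

theorem tsum_ofReal_one_sub_mul_pow {r : ℝ} (hr₀ : 0 ≤ r) (hr₁ : r < 1) :
    ∑' m : ℕ, ENNReal.ofReal ((1 - r) * r ^ m) = 1 := by
  have hsum : Summable fun m : ℕ => (1 - r) * r ^ m :=
    (summable_geometric_of_lt_one hr₀ hr₁).mul_left _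
  rw [← ENNReal.ofReal_tsum_of_nonneg (fun m => mul_nonneg (by linarith) (pow_nonneg hr₀ m)) hsum,
    tsum_mul_left, tsum_geometric_of_lt_one hr₀ hr₁, mul_inv_cancel₀ (by linarith),
    ENNReal.ofReal_one]

noncomputable def parityWeight (y : ℝ) (e : ℕ) : ℝ≥0∞ :=
  if e < 2 then ENNReal.ofReal (y ^ e / (1 + y)) else 0

theorem tsum_parityWeight {y : ℝ} (hy : 0 ≤ y) : ∑' e, parityWeight y e = 1 := by
  rw [tsum_eq_sum (f := parityWeight y) (s := Finset.range 2) fun e he =>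
    if_neg (by simpa using he)]
  simp only [Finset.sum_range_succ, Finset.sum_range_zero, parityWeight, zero_add]
  rw [if_pos (by norm_num), if_pos (by norm_num),
    ← ENNReal.ofReal_add (by positivity) (by positivity), ← ENNReal.ofReal_one]
  congr 1
  field_simp

/-- **Parity decomposition of a geometric random variable.**
Let `Z` be geometric with `P(Z = k) = (1−y)·y^k`, `y ∈ (0,1)`.  Then the parity
bit `Z mod 2` is Bernoulli with `P(1) = y/(1+y)`, `P(0) = 1/(1+y)`, the half
`Z div 2` is geometric with parameter `y²`, the two are independent (the joint
law is the product of the marginals), and equivalently, for `e ∈ {0,1}` and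
`m ∈ ℕ`, `(1−y)·y^{e+2m} = (y^e/(1+y)) · (1−y²)·(y²)^m`. -/
theorem geometric_parity_decomposition (y : ℝ) (hy : y ∈ Set.Ioo (0 : ℝ) 1)
    (Z : PMF ℕ) (hZ : ∀ k, Z k = ENNReal.ofReal ((1 - y) * y ^ k)) :
    ((Z.map (fun k => k % 2)) 1 = ENNReal.ofReal (y / (1 + y)) ∧
      (Z.map (fun k => k % 2)) 0 = ENNReal.ofReal (1 / (1 + y))) ∧
    (∀ m : ℕ, (Z.map (fun k => k / 2)) m = ENNReal.ofReal ((1 - y ^ 2) * (y ^ 2) ^ m)) ∧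
    (∀ (e m : ℕ), (Z.map (fun k => (k % 2, k / 2))) (e, m) =
      (Z.map (fun k => k % 2)) e * (Z.map (fun k => k / 2)) m) ∧
    (∀ (e m : ℕ), e ≤ 1 →
      (1 - y) * y ^ (e + 2 * m) = (y ^ e / (1 + y)) * ((1 - y ^ 2) * (y ^ 2) ^ m)) := by
  obtain ⟨hy₀, hy₁⟩ := hy
  have hy' : 1 + y ≠ 0 := by positivity
  set joint := Z.map fun k => (k % 2, k / 2)
  have hjoint (e m : ℕ) :
      joint (e, m) = parityWeight y e * ENNReal.ofReal ((1 - y ^ 2) * (y ^ 2) ^ m) := by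
    rw [PMF.map_mod_two_div_two_apply, parityWeight]
    split_ifs
    · rw [hZ, one_sub_mul_pow_add_two_mul hy', ENNReal.ofReal_mul (by positivity)]
    · rw [zero_mul]
  have hparity (e : ℕ) : Z.map (fun k => k % 2) e = parityWeight y e := by
    rw [show Z.map (fun k => k % 2) = joint.map Prod.fst by rw [PMF.map_comp]; rfl,
      PMF.map_fst_apply]
    simp_rw [hjoint]
    rw [ENNReal.tsum_mul_left, tsum_ofReal_one_sub_mul_pow (by positivity) (by nlinarith),
      mul_one]
  have hhalf (m : ℕ) : Z.map (fun k => k / 2) m = ENNReal.ofReal ((1 - y ^ 2) * (y ^ 2) ^ m) := by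
    rw [show Z.map (fun k => k / 2) = joint.map Prod.snd by rw [PMF.map_comp]; rfl,
      PMF.map_snd_apply]
    simp_rw [hjoint]
    rw [ENNReal.tsum_mul_right, tsum_parityWeight hy₀.le, one_mul]
  refine ⟨⟨by simpa [parityWeight] using hparity 1, by simpa [parityWeight] using hparity 0⟩,
    hhalf, fun e m => by rw [hjoint, hparity, hhalf],
    fun e m _ => one_sub_mul_pow_add_two_mul hy' e m⟩
end

section
/- Let a ∈ (0,1) and let (Y_j)_{j≥1} be independent random variables, with Y_j Poisson distributed with mean a^j/j, defined on the product probability measure on ℕ^{ℕ≥1}. Then Σ_{j≥1} j·Y_j is almost surely finite, and for every k ∈ ℕ, P(Σ_{j≥1} j·Y_j = k) = (1−a)·a^k; that is, Σ_j j·Y_j is geometric with parameter a. -/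
open Finset MeasureTheory ProbabilityTheory Real
open scoped Nat ENNReal

/-!
Only finitely many `Y_j` are nonzero, so the event `∑ j Y_j = k` is the disjoint union, over
the partitions `λ` of `k`, of the atoms `{Y = (m_j(λ))_j}` given by the multiplicities of `λ`.
By independence such an atom has probability
`∏_j e^{-a^j/j} (a^j/j)^{m_j} / m_j! = (1 - a) a^k / z_λ`, because `∑_j a^j/j = -log (1 - a)`
and `z_λ = ∏_j j^{m_j} m_j!`. It remains to see
`∑_{λ ⊢ k} 1 / z_λ = 1`, which follows by induction from `k / z_λ = ∑_{j ∈ λ} 1 / z_{λ - j}`.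
Almost sure finiteness is Borel–Cantelli, as `P(Y_j ≠ 0) ≤ a^j/j` is summable.
-/

/-- The order `z_M` of the centralizer in `Sₙ` of a permutation of cycle type `M`. -/
def centralizerCard (M : Multiset ℕ) : ℕ :=
  ∏ i ∈ M.toFinset, i ^ M.count i * (M.count i)!

lemma centralizerCard_eq_prod_of_subset {M : Multiset ℕ} {s : Finset ℕ} (hs : M.toFinset ⊆ s) :
    centralizerCard M = ∏ i ∈ s, i ^ M.count i * (M.count i)! :=
  prod_subset hs fun i _ hi => by
    simp [Multiset.count_eq_zero.2 (mt Multiset.mem_toFinset.2 hi)]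

lemma centralizerCard_cons (j : ℕ) (M : Multiset ℕ) :
    centralizerCard (j ::ₘ M) = j * (M.count j + 1) * centralizerCard M := by
  classical
  have factor : ∀ i, i ^ (j ::ₘ M).count i * ((j ::ₘ M).count i)! =
      (if i = j then j * (M.count j + 1) else 1) * (i ^ M.count i * (M.count i)!) := by
    intro i
    by_cases h : i = j
    · subst h
      simp only [Multiset.count_cons_self, if_true, pow_succ, Nat.factorial_succ]
      ring
    · simp [h, Multiset.count_cons_of_ne h]
  rw [centralizerCard_eq_prod_of_subset (Multiset.toFinset_cons j M).le,
    centralizerCard_eq_prod_of_subset (subset_insert j M.toFinset)]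
  simp_rw [factor, prod_mul_distrib, prod_ite_eq', if_pos (mem_insert_self j _)]

lemma centralizerCard_of_mem {j : ℕ} {M : Multiset ℕ} (hj : j ∈ M) :
    centralizerCard M = j * M.count j * centralizerCard (M.erase j) := by
  conv_lhs => rw [← Multiset.cons_erase hj]
  rw [centralizerCard_cons, Multiset.count_erase_self,
    Nat.sub_add_cancel (Multiset.count_pos.2 hj)]

namespace Nat.Partition

lemma sum_mul_count_eq {n : ℕ} (p : n.Partition) :
    ∑ i ∈ p.parts.toFinset, i * p.parts.count i = n := by
  classical
  simp_rw [mul_comm _ (p.parts.count _), ← smul_eq_mul, ← sum_multiset_count, p.parts_sum]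

lemma sum_sum_parts_erase {M : Type*} [AddCommMonoid M] (n : ℕ) (f : ℕ → Multiset ℕ → M) :
    ∑ p : n.Partition, ∑ j ∈ p.parts.toFinset, f j (p.parts.erase j) =
      ∑ j ∈ Icc 1 n, ∑ q : (n - j).Partition, f j q.parts := by
  classical
  rw [sum_comm' (t' := Icc 1 n) (s' := fun j => univ.filter (j ∈ ·.parts))]
  · refine sum_congr rfl fun j hj => ?_
    obtain ⟨hj1, hjn⟩ := mem_Icc.1 hj
    rw [sum_subtype (p := (j ∈ ·.parts)) _ (fun p => by simp)]
    exact Fintype.sum_equiv (partitionWithPartEquiv hj1 hjn) _ _ fun p => by simp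
  · intro p j
    simp only [mem_univ, Multiset.mem_toFinset, true_and, mem_filter, mem_Icc, iff_self_and]
    exact fun hj => ⟨p.parts_pos hj, p.le_of_mem_parts hj⟩

/-- The class equation of `Sₙ`, divided by `n!`. -/
theorem sum_inv_centralizerCard (K : Type*) [Field K] [CharZero K] (n : ℕ) :
    ∑ p : n.Partition, (centralizerCard p.parts : K)⁻¹ = 1 := by
  classical
  induction n using Nat.strong_induction_on with
  | _ n ih =>
  rcases n.eq_zero_or_pos with rfl | hn
  · simp [centralizerCard]
  have weighted : ∀ p : n.Partition, (n : K) * (centralizerCard p.parts : K)⁻¹ =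
      ∑ j ∈ p.parts.toFinset, (centralizerCard (p.parts.erase j) : K)⁻¹ := by
    intro p
    have hn : (n : K) = ∑ j ∈ p.parts.toFinset, (j : K) * p.parts.count j := by
      exact_mod_cast p.sum_mul_count_eq.symm
    rw [hn, sum_mul]
    refine sum_congr rfl fun j hj => ?_
    have hj : j ∈ p.parts := Multiset.mem_toFinset.1 hj
    have hj0 : (j : K) ≠ 0 := Nat.cast_ne_zero.2 (p.parts_pos hj).ne'
    have hc0 : (p.parts.count j : K) ≠ 0 := Nat.cast_ne_zero.2 (Multiset.count_pos.2 hj).ne'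
    rw [centralizerCard_of_mem hj]
    push_cast
    field_simp
  apply mul_left_cancel₀ (Nat.cast_ne_zero.2 hn.ne' : (n : K) ≠ 0)
  rw [mul_sum, sum_congr rfl fun p _ => weighted p,
    sum_sum_parts_erase n fun _ M => (centralizerCard M : K)⁻¹,
    sum_congr rfl fun j hj => ih (n - j) (by grind)]
  simp

def multiplicities {n : ℕ} (p : n.Partition) : {j : ℕ // 0 < j} → ℕ :=
  fun j => p.parts.count (j : ℕ)

lemma multiplicities_injective (n : ℕ) : Function.Injective (multiplicities (n := n)) := by
  intro p q h
  ext m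
  rcases m.eq_zero_or_pos with rfl | hm
  · rw [Multiset.count_eq_zero_of_notMem fun h => (p.parts_pos h).false,
      Multiset.count_eq_zero_of_notMem fun h => (q.parts_pos h).false]
  · exact congrFun h ⟨m, hm⟩

lemma support_multiplicities_subset {n : ℕ} (p : n.Partition) :
    Function.support p.multiplicities ⊆ p.parts.toFinset.subtype (0 < ·) := by
  intro j hj
  simpa [multiplicities] using hj

lemma multiplicities_eq_zero_of_notMem {n : ℕ} (p : n.Partition) {j : {j : ℕ // 0 < j}}
    (hj : j ∉ p.parts.toFinset.subtype (0 < ·)) : p.multiplicities j = 0 :=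
  Function.notMem_support.1 fun h => hj (p.support_multiplicities_subset h)

lemma finsum_mul_eq_sum {ω : {j : ℕ // 0 < j} → ℕ} {s : Finset {j : ℕ // 0 < j}}
    (hs : Function.support ω ⊆ s) :
    ∑ᶠ j : {j : ℕ // 0 < j}, (j : ℕ) * ω j = ∑ j ∈ s, (j : ℕ) * ω j :=
  finsum_eq_sum_of_support_subset _ ((Function.support_mul_subset_right _ _).trans hs)

lemma range_multiplicities (n : ℕ) : Set.range (multiplicities (n := n)) =
    {ω | (Function.support ω).Finite ∧ ∑ᶠ j : {j : ℕ // 0 < j}, (j : ℕ) * ω j = n} := by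
  classical
  ext ω
  constructor
  · rintro ⟨p, rfl⟩
    refine ⟨(Finset.finite_toSet _).subset p.support_multiplicities_subset, ?_⟩
    rw [finsum_mul_eq_sum p.support_multiplicities_subset]
    exact (sum_subtype_of_mem (fun i => i * p.parts.count i)
      fun i hi => p.parts_pos (Multiset.mem_toFinset.1 hi)).trans p.sum_mul_count_eq
  · rintro ⟨hfin, hsum⟩
    set T := Finsupp.toMultiset (Finsupp.ofSupportFinite ω hfin)
    have hcount : ∀ j, T.count j = ω j := fun j => Finsupp.count_toMultiset _ j
    refine ⟨⟨T.map Subtype.val, fun hi => ?_, ?_⟩, funext fun j => ?_⟩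
    · obtain ⟨j, -, rfl⟩ := Multiset.mem_map.1 hi
      exact j.2
    · rw [← hsum, sum_multiset_map_count, finsum_mul_eq_sum (s := T.toFinset)]
      · exact sum_congr rfl fun j _ => by rw [hcount, smul_eq_mul, mul_comm]
      · intro j hj
        rw [Finset.mem_coe, Multiset.mem_toFinset, ← Multiset.count_ne_zero, hcount]
        exact hj
    · exact (Multiset.count_map_eq_count' _ _ Subtype.val_injective j).trans (hcount j)

lemma prod_pow_div_factorial_multiplicities (a : ℝ) {n : ℕ} (p : n.Partition) :
    ∏ j ∈ p.parts.toFinset.subtype (0 < ·),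
      (a ^ (j : ℕ) / (j : ℕ)) ^ p.multiplicities j / (p.multiplicities j)! =
      a ^ n / centralizerCard p.parts := by
  refine (prod_subtype_of_mem
    (fun i => (a ^ i / i) ^ p.parts.count i / (p.parts.count i)!)
    fun i hi => p.parts_pos (Multiset.mem_toFinset.1 hi)).trans ?_
  simp only [div_pow, ← pow_mul, div_div, prod_div_distrib, prod_pow_eq_pow_sum,
    p.sum_mul_count_eq, centralizerCard]
  push_cast
  rfl

end Nat.Partition

lemma measure_range_of_injective {α β : Type*} [Fintype α] [MeasurableSpace β]
    [MeasurableSingletonClass β] (μ : Measure β) {f : α → β} (hf : Function.Injective f) :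
    μ (Set.range f) = ∑ a, μ {f a} := by
  classical
  rw [← Set.image_univ, ← coe_univ, ← coe_image, ← sum_measure_singleton,
    sum_image fun a _ b _ h => hf h]

section IndependentCoordinates

variable {ι : Type*} [Countable ι]

theorem hasProd_measure_singleton_of_iIndepFun {β : Type*} [MeasurableSpace β]
    [MeasurableSingletonClass β] {μ : Measure (ι → β)} [IsFiniteMeasure μ]
    (hindep : iIndepFun (fun i ω => ω i) μ) (x : ι → β) :
    HasProd (fun i => μ {ω | ω i = x i}) (μ {x}) := by
  set cylinder : Finset ι → Set (ι → β) := fun s => ⋂ i ∈ s, (fun ω => ω i) ⁻¹' {x i}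
  have hcylinder : ∀ s, μ (cylinder s) = ∏ i ∈ s, μ {ω | ω i = x i} := fun s =>
    hindep.measure_inter_preimage_eq_mul s fun i _ => measurableSet_singleton (x i)
  have hinter : ⋂ s, cylinder s = {x} := by
    ext ω
    simp only [cylinder, Set.mem_iInter, Set.mem_preimage, Set.mem_singleton_iff]
    exact ⟨fun h => funext fun i => h {i} i (mem_singleton_self i), fun h _ i _ => by rw [h]⟩
  have hlim := tendsto_measure_iInter_atTop (μ := μ) (s := cylinder)
    (fun s => (Finset.measurableSet_biInter s fun i _ =>
      measurable_pi_apply i (measurableSet_singleton (x i))).nullMeasurableSet)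
    (fun s t hst => Set.biInter_subset_biInter_left hst) ⟨∅, measure_ne_top μ _⟩
  rw [hinter] at hlim
  simp only [Function.comp_def, hcylinder] at hlim
  exact hlim

variable {μ : Measure (ι → ℕ)} {r : ι → ℝ}

theorem measure_singleton_of_iIndepFun_poisson [IsFiniteMeasure μ]
    (hindep : iIndepFun (fun i ω => ω i) μ) (hr0 : ∀ i, 0 ≤ r i) {R : ℝ} (hr : HasSum r R)
    (hmarg : ∀ i k, μ {ω | ω i = k} = ENNReal.ofReal (exp (-r i) * r i ^ k / k !))
    {x : ι → ℕ} {s : Finset ι} (hx : ∀ i ∉ s, x i = 0) :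
    μ {x} = ENNReal.ofReal (exp (-R) * ∏ i ∈ s, r i ^ x i / (x i)!) := by
  have hreal : HasProd (fun i => exp (-r i) * (r i ^ x i / (x i)!))
      (exp (-R) * ∏ i ∈ s, r i ^ x i / (x i)!) :=
    hr.neg.rexp.mul (hasProd_prod_of_ne_finset_one fun i hi => by simp [hx i hi])
  refine (hasProd_measure_singleton_of_iIndepFun hindep x).unique ?_
  refine ((ENNReal.continuous_ofReal.tendsto _).comp hreal).congr fun t => ?_
  rw [Function.comp_apply,
    ENNReal.ofReal_prod_of_nonneg fun i _ => by have := hr0 i; positivity]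
  exact prod_congr rfl fun i _ => by rw [← mul_div_assoc, ← hmarg]

theorem measure_support_finite_of_poisson [IsProbabilityMeasure μ] (hr0 : ∀ i, 0 ≤ r i)
    (hr : Summable r) (hmarg : ∀ i, μ {ω | ω i = 0} = ENNReal.ofReal (exp (-r i))) :
    μ {ω | (Function.support ω).Finite} = 1 := by
  have hbound : ∀ i, μ {ω | ω i ≠ 0} ≤ ENNReal.ofReal (r i) := by
    intro i
    have hmeas : MeasurableSet {ω : ι → ℕ | ω i = 0} :=
      measurable_pi_apply i (measurableSet_singleton 0)
    rw [← Set.compl_ofPred, prob_compl_eq_one_sub hmeas, hmarg, tsub_le_iff_right,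
      ← ENNReal.ofReal_add (hr0 i) (exp_nonneg _), ← ENNReal.ofReal_one]
    exact ENNReal.ofReal_le_ofReal (by linarith [add_one_le_exp (-r i)])
  have hsum : ∑' i, μ {ω | ω i ≠ 0} ≠ ∞ :=
    ne_top_of_le_ne_top (ENNReal.ofReal_tsum_of_nonneg hr0 hr ▸ ENNReal.ofReal_ne_top)
      (ENNReal.tsum_le_tsum hbound)
  exact (measure_congr (ae_eq_univ.2 (ae_iff.1 (ae_finite_setOfPred_mem hsum)))).trans
    measure_univ

end IndependentCoordinates

lemma hasSum_pos_pow_div_log_of_abs_lt_one {a : ℝ} (ha : |a| < 1) :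
    HasSum (fun j : {j : ℕ // 0 < j} => a ^ (j : ℕ) / (j : ℕ)) (-log (1 - a)) := by
  have h := Real.hasSum_pow_div_log_of_abs_lt_one ha
  simp only [← Nat.cast_succ] at h
  exact hasSum_pnat_iff_hasSum_succ (f := fun n : ℕ => a ^ n / (n : ℝ)) |>.2 h

/-- **Compound Poisson representation of the geometric distribution.**
Let `(Y_j)_{j≥1}` be independent, with `Y_j` Poisson of mean `a^j/j`,
`a ∈ (0,1)`, realized as the coordinates of a product probability measure on
`ℕ^{ℕ≥1}`.  Then `Σ_{j≥1} j·Y_j` is almost surely finite (almost surely only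
finitely many `Y_j` are nonzero) and for every `k`,
`P(Σ_j j·Y_j = k) = (1−a)·a^k`, i.e. the sum is geometric with parameter `a`. -/
theorem compound_poisson_geometric (a : ℝ) (ha : a ∈ Set.Ioo (0 : ℝ) 1)
    (μ : Measure ({j : ℕ // 0 < j} → ℕ)) [IsProbabilityMeasure μ]
    (hindep : iIndepFun (fun j ω => ω j) μ)
    (hmarg : ∀ (j : {j : ℕ // 0 < j}) (k : ℕ),
      μ {ω | ω j = k} = ENNReal.ofReal
        (Real.exp (-(a ^ (j : ℕ) / (j : ℕ))) * (a ^ (j : ℕ) / (j : ℕ)) ^ k / k.factorial)) :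
    μ {ω | (Function.support ω).Finite} = 1 ∧
    ∀ k : ℕ,
      μ {ω | (Function.support ω).Finite ∧ ∑ᶠ j : {j : ℕ // 0 < j}, j.1 * ω j = k} =
        ENNReal.ofReal ((1 - a) * a ^ k) := by
  obtain ⟨ha0, ha1⟩ := ha
  have hr0 : ∀ j : {j : ℕ // 0 < j}, 0 ≤ a ^ (j : ℕ) / (j : ℕ) := fun j => by positivity
  have hr := hasSum_pos_pow_div_log_of_abs_lt_one (abs_lt.2 ⟨by linarith, ha1⟩)
  have hexp : exp (-(-log (1 - a))) = 1 - a := by rw [neg_neg, exp_log (by linarith)]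
  refine ⟨measure_support_finite_of_poisson hr0 hr.summable fun j => by simpa using hmarg j 0,
    fun k => ?_⟩
  rw [← Nat.Partition.range_multiplicities,
    measure_range_of_injective μ (Nat.Partition.multiplicities_injective k)]
  simp_rw [measure_singleton_of_iIndepFun_poisson hindep hr0 hr hmarg
    fun j hj => Nat.Partition.multiplicities_eq_zero_of_notMem _ hj,
    Nat.Partition.prod_pow_div_factorial_multiplicities, hexp]
  rw [← ENNReal.ofReal_sum_of_nonneg fun p _ => by positivity]
  simp_rw [div_eq_mul_inv, ← mul_sum, Nat.Partition.sum_inv_centralizerCard, mul_one]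
end

section
/- For every x ∈ (0,1), Σ_{j=1}^∞ x^j/(j·(1−x^j)) ≤ (π²/6) · x/(1−x). Moreover, with c = π/√6 and x = x(n) = exp(−c/√n), the right-hand side (π²/6)·x(n)/(1−x(n)) is asymptotic to c·√n as n → ∞; hence s(n) := Σ_{i,j≥1} x(n)^{ij}/j = Σ_{j≥1} x(n)^j/(j(1−x(n)^j)) is O(√n). -/
/-!
Each term is bounded by `(1/j²)·x/(1-x)`, since `j·x^j ≤ x + x² + ⋯ + x^j = x(1-x^j)/(1-x)`, and
`Σ 1/j² = π²/6`. Writing `x = e^{-t}`, `x/(1-x) = 1/(e^t-1) ~ 1/t` as `t → 0`, and `t = c/√n` with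
`c² = π²/6` turns `(π²/6)·x/(1-x)` into `~ c√n`. Summing the geometric series in `i` identifies the
double sum `s(n)` with the single sum, so it is `O(√n)`.
-/

open Filter Asymptotics Real

open Topology

theorem hasSum_one_div_nat_add_one_sq :
    HasSum (fun j : ℕ => 1 / ((j : ℝ) + 1) ^ 2) (π ^ 2 / 6) := by
  simpa using (hasSum_nat_add_iff (f := fun n : ℕ => ((n : ℝ) ^ 2)⁻¹) 1).2
    (by simpa using hasSum_zeta_two)

section Geometric

variable {x : ℝ}

theorem nat_mul_pow_le_sum_pow_succ (hx0 : 0 ≤ x) (hx1 : x ≤ 1) (k : ℕ) :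
    k * x ^ k ≤ ∑ i ∈ Finset.range k, x ^ (i + 1) := by
  simpa using Finset.card_nsmul_le_sum (Finset.range k) (fun i => x ^ (i + 1)) (x ^ k)
    fun i hi => pow_le_pow_of_le_one hx0 hx1 (Finset.mem_range.1 hi)

theorem nat_mul_pow_mul_one_sub_le (hx0 : 0 ≤ x) (hx1 : x ≤ 1) (k : ℕ) :
    k * x ^ k * (1 - x) ≤ x * (1 - x ^ k) := by
  have hgeom : x * (1 - x ^ k) = (∑ i ∈ Finset.range k, x ^ (i + 1)) * (1 - x) := by
    rw [Finset.sum_congr rfl fun i _ => pow_succ' x i, ← Finset.mul_sum]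
    linear_combination x * geom_sum_mul x k
  rw [hgeom]
  exact mul_le_mul_of_nonneg_right (nat_mul_pow_le_sum_pow_succ hx0 hx1 k) (by linarith)

theorem pow_div_mul_one_sub_pow_le (hx0 : 0 ≤ x) (hx1 : x < 1) {k : ℕ} (hk : k ≠ 0) :
    x ^ k / (k * (1 - x ^ k)) ≤ 1 / (k : ℝ) ^ 2 * (x / (1 - x)) := by
  have hk' : (0 : ℝ) < k := by positivity
  have hxk : 0 < 1 - x ^ k := by linarith [pow_lt_one₀ hx0 hx1 hk]
  rw [div_mul_div_comm, one_mul, div_le_div_iff₀ (by positivity) (mul_pos (by positivity) (by linarith))]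
  nlinarith [nat_mul_pow_mul_one_sub_le hx0 hx1.le k]

end Geometric

section Series

variable {x : ℝ}

theorem tsum_pow_div_mul_one_sub_pow_le (hx0 : 0 ≤ x) (hx1 : x < 1) :
    ∑' j : ℕ, x ^ (j + 1) / (((j : ℝ) + 1) * (1 - x ^ (j + 1))) ≤ π ^ 2 / 6 * (x / (1 - x)) := by
  have hle (j : ℕ) : x ^ (j + 1) / (((j : ℝ) + 1) * (1 - x ^ (j + 1)))
      ≤ 1 / ((j : ℝ) + 1) ^ 2 * (x / (1 - x)) := by
    have := pow_div_mul_one_sub_pow_le hx0 hx1 j.add_one_ne_zero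
    push_cast at this
    exact this
  have hnonneg (j : ℕ) : 0 ≤ x ^ (j + 1) / (((j : ℝ) + 1) * (1 - x ^ (j + 1))) := by
    have : 0 < 1 - x ^ (j + 1) := by linarith [pow_lt_one₀ hx0 hx1 j.add_one_ne_zero]
    positivity
  have hbasel := hasSum_one_div_nat_add_one_sq.mul_right (x / (1 - x))
  exact hasSum_le hle (hbasel.summable.of_nonneg_of_le hnonneg hle).hasSum hbasel

theorem hasSum_pow_mul_succ_div (hx0 : 0 ≤ x) (hx1 : x < 1) (j : ℕ) :
    HasSum (fun i : ℕ => x ^ ((i + 1) * (j + 1)) / ((j : ℝ) + 1))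
      (x ^ (j + 1) / (((j : ℝ) + 1) * (1 - x ^ (j + 1)))) := by
  have hy : x ^ (j + 1) < 1 := pow_lt_one₀ hx0 hx1 j.add_one_ne_zero
  have hgeom := ((hasSum_geometric_of_lt_one (by positivity) hy).mul_left (x ^ (j + 1))).div_const
    ((j : ℝ) + 1)
  have hvalue : x ^ (j + 1) * (1 - x ^ (j + 1))⁻¹ / ((j : ℝ) + 1)
      = x ^ (j + 1) / (((j : ℝ) + 1) * (1 - x ^ (j + 1))) := by
    rw [← div_eq_mul_inv, div_div, mul_comm]
  rw [← hvalue]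
  refine hgeom.congr_fun fun i => ?_
  rw [← pow_succ', ← pow_mul, mul_comm]

theorem summable_uncurry_pow_mul_succ_div (hx0 : 0 ≤ x) (hx1 : x < 1) :
    Summable (Function.uncurry fun i j : ℕ => x ^ ((i + 1) * (j + 1)) / ((j : ℝ) + 1)) := by
  have hgeom := summable_geometric_of_lt_one hx0 hx1
  refine (hgeom.mul_of_nonneg hgeom (fun i => by positivity) (fun j => by positivity)).of_nonneg_of_le
    (fun _ => by dsimp only [Function.uncurry]; positivity) fun ⟨i, j⟩ => ?_
  calc x ^ ((i + 1) * (j + 1)) / ((j : ℝ) + 1)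
      ≤ x ^ ((i + 1) * (j + 1)) := div_le_self (by positivity) (by simp)
    _ ≤ x ^ (i + j) := pow_le_pow_of_le_one hx0 hx1.le (by nlinarith)
    _ = x ^ i * x ^ j := pow_add x i j

theorem tsum_tsum_pow_mul_succ_div (hx0 : 0 ≤ x) (hx1 : x < 1) :
    ∑' (i : ℕ) (j : ℕ), x ^ ((i + 1) * (j + 1)) / ((j : ℝ) + 1)
      = ∑' j : ℕ, x ^ (j + 1) / (((j : ℝ) + 1) * (1 - x ^ (j + 1))) := by
  have hsum := summable_uncurry_pow_mul_succ_div hx0 hx1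
  rw [← hsum.tsum_comm' hsum.prod_factor hsum.prod_symm.prod_factor]
  exact tsum_congr fun j => (hasSum_pow_mul_succ_div hx0 hx1 j).tsum_eq

theorem tsum_tsum_pow_mul_succ_div_le (hx0 : 0 ≤ x) (hx1 : x < 1) :
    ∑' (i : ℕ) (j : ℕ), x ^ ((i + 1) * (j + 1)) / ((j : ℝ) + 1) ≤ π ^ 2 / 6 * (x / (1 - x)) :=
  (tsum_tsum_pow_mul_succ_div hx0 hx1).trans_le (tsum_pow_div_mul_one_sub_pow_le hx0 hx1)

end Series

theorem isEquivalent_exp_sub_one : (fun t : ℝ => exp t - 1) ~[𝓝 0] id := by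
  have := hasDerivAt_iff_isLittleO_nhds_zero.1 (hasDerivAt_exp 0)
  simp only [zero_add, exp_zero, smul_eq_mul, mul_one] at this
  exact this

theorem exp_neg_div_one_sub_exp_neg (t : ℝ) : exp (-t) / (1 - exp (-t)) = (exp t - 1)⁻¹ := by
  rw [exp_neg, ← mul_div_mul_right _ _ (exp_ne_zero t), sub_mul, inv_mul_cancel₀ (exp_ne_zero t),
    one_mul, one_div]

theorem isEquivalent_exp_neg_div_one_sub_exp_neg :
    (fun t : ℝ => exp (-t) / (1 - exp (-t))) ~[𝓝 0] fun t => t⁻¹ := by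
  simp only [exp_neg_div_one_sub_exp_neg]
  exact isEquivalent_exp_sub_one.inv

theorem fristedtX_eq_exp_neg (n : ℕ) : fristedtX n = exp (-(π / √6 / √n)) := by
  rw [fristedtX, neg_div]

theorem fristedtX_mem_Ioo {n : ℕ} (hn : n ≠ 0) : fristedtX n ∈ Set.Ioo 0 1 := by
  rw [fristedtX_eq_exp_neg]
  exact ⟨exp_pos _, exp_lt_one_iff.2 (neg_neg_of_pos (by positivity))⟩

theorem isEquivalent_fristedtX_div_one_sub :
    (fun n : ℕ => fristedtX n / (1 - fristedtX n)) ~[atTop] fun n => √n / (π / √6) := by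
  have htend : Tendsto (fun n : ℕ => π / √6 / √n) atTop (𝓝 0) :=
    tendsto_const_nhds.div_atTop (tendsto_sqrt_atTop.comp tendsto_natCast_atTop_atTop)
  simpa only [Function.comp_def, fristedtX_eq_exp_neg, inv_div] using
    isEquivalent_exp_neg_div_one_sub_exp_neg.comp_tendsto htend

theorem isEquivalent_pi_sq_div_six_mul_fristedtX_div_one_sub :
    (fun n : ℕ => π ^ 2 / 6 * (fristedtX n / (1 - fristedtX n))) ~[atTop] fun n => π / √6 * √n := by
  have hc : π / √6 ≠ 0 := by positivity
  have hsq : π ^ 2 / 6 = (π / √6) ^ 2 := by rw [div_pow, sq_sqrt (by norm_num)]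
  refine ((IsEquivalent.refl (u := fun _ : ℕ => π ^ 2 / 6)).mul
    isEquivalent_fristedtX_div_one_sub).congr_right (Eventually.of_forall fun n => ?_)
  simp only [Pi.mul_apply, hsq]
  field_simp

/-- **Total rate of the Poisson-process proposal is `O(√n)`.**
For every `x ∈ (0,1)`, `Σ_{j≥1} x^j/(j(1−x^j)) ≤ (π²/6)·x/(1−x)`; with
`c = π/√6` and `x = x(n) = exp(−c/√n)` the right-hand side is asymptotic to
`c·√n`; hence `s(n) = Σ_{i,j≥1} x(n)^{ij}/j` is `O(√n)`. -/
theorem poisson_proposal_rate_bound :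
    (∀ x ∈ Set.Ioo (0 : ℝ) 1,
      ∑' j : ℕ, x ^ (j + 1) / (((j : ℝ) + 1) * (1 - x ^ (j + 1)))
        ≤ (Real.pi ^ 2 / 6) * (x / (1 - x))) ∧
    ((fun n : ℕ => (Real.pi ^ 2 / 6) * (fristedtX n / (1 - fristedtX n)))
      ~[atTop] (fun n : ℕ => (Real.pi / Real.sqrt 6) * Real.sqrt n)) ∧
    ((fun n : ℕ => ∑' (i : ℕ) (j : ℕ), fristedtX n ^ ((i + 1) * (j + 1)) / ((j : ℝ) + 1))
      =O[atTop] (fun n : ℕ => Real.sqrt n)) := by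
  refine ⟨fun x hx => tsum_pow_div_mul_one_sub_pow_le hx.1.le hx.2,
    isEquivalent_pi_sq_div_six_mul_fristedtX_div_one_sub, ?_⟩
  have hbound : (fun n : ℕ => ∑' (i : ℕ) (j : ℕ), fristedtX n ^ ((i + 1) * (j + 1)) / ((j : ℝ) + 1))
      =O[atTop] fun n => π ^ 2 / 6 * (fristedtX n / (1 - fristedtX n)) := by
    refine IsBigO.of_bound' ?_
    filter_upwards [eventually_ne_atTop 0] with n hn
    obtain ⟨hx0, hx1⟩ := fristedtX_mem_Ioo hn
    have hnonneg : 0 ≤ ∑' (i : ℕ) (j : ℕ), fristedtX n ^ ((i + 1) * (j + 1)) / ((j : ℝ) + 1) :=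
      tsum_nonneg fun i => tsum_nonneg fun j => by positivity
    have hle := tsum_tsum_pow_mul_succ_div_le hx0.le hx1
    exact abs_le_abs hle (by linarith)
  exact hbound.trans (isEquivalent_pi_sq_div_six_mul_fristedtX_div_one_sub.isBigO.trans
    (isBigO_const_mul_self _ _ _))
end

section
/- Let c = π/√6 and for n ≥ 1 set x = x(n) = exp(−c/√n). Then Σ_{i,j≥1} (x^{ij}/j)·ln(j·x^{−ij}) ≤ (c − ζ'(2)/c)·√n, where ζ' is the derivative of the Riemann zeta function. -/
open Real

/-!
Write `x = e^{-t}` with `t = c/√n`. Since `ln(j x^{-ij}) = ln j + i j t`, the `(i, j)` term is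
`(ln j / j + i t) y^i` with `y = x^j = e^{-jt}`, so summing the geometric series in `i` gives
`(ln j / j) · y/(1-y) + t · y/(1-y)²`. The elementary bounds `e^{-r}/(1-e^{-r}) ≤ 1/r` and
`e^{-r}/(1-e^{-r})² = 1/(2 sinh(r/2))² ≤ 1/r²` at `r = jt` bound this column by
`(ln j + 1)/(j² t)`. Summing over `j` with `Σ 1/j² = π²/6 = c²` and `Σ ln j / j² = -ζ'(2)`
gives `(c² - ζ'(2))/t = (c - ζ'(2)/c)·√n`.
-/

lemma exp_neg_div_one_sub_exp_neg_le_inv {r : ℝ} (hr : 0 < r) :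
    exp (-r) / (1 - exp (-r)) ≤ r⁻¹ := by
  have hexp : exp (-r) / (1 - exp (-r)) = (exp r - 1)⁻¹ := by
    rw [exp_neg]
    have : 1 < exp r := one_lt_exp_iff.mpr hr
    field_simp
  rw [hexp]
  exact inv_anti₀ hr (by linarith [add_one_le_exp r])

lemma exp_neg_div_one_sub_exp_neg_sq_le_inv_sq {r : ℝ} (hr : 0 < r) :
    exp (-r) / (1 - exp (-r)) ^ 2 ≤ (r ^ 2)⁻¹ := by
  have hexp : exp (-r) / (1 - exp (-r)) ^ 2 = ((2 * sinh (r / 2)) ^ 2)⁻¹ := by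
    have h : exp r = exp (r / 2) ^ 2 := by rw [← exp_nat_mul]; ring_nf
    rw [sinh_eq, exp_neg, exp_neg, h]
    have : 1 < exp (r / 2) := one_lt_exp_iff.mpr (by positivity)
    field_simp
  rw [hexp]
  have hsinh : r / 2 < sinh (r / 2) := self_lt_sinh_iff.mpr (by positivity)
  exact inv_anti₀ (by positivity) (pow_le_pow_left₀ hr.le (by linarith) 2)

section Geometric

variable {𝕜 : Type*} [NormedField 𝕜] {y : 𝕜}

lemma hasSum_pow_succ (hy : ‖y‖ < 1) : HasSum (fun i : ℕ ↦ y ^ (i + 1)) (y / (1 - y)) := by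
  simpa [pow_succ', div_eq_mul_inv] using (hasSum_geometric_of_norm_lt_one hy).mul_left y

lemma hasSum_succ_mul_pow_succ (hy : ‖y‖ < 1) :
    HasSum (fun i : ℕ ↦ ((i : 𝕜) + 1) * y ^ (i + 1)) (y / (1 - y) ^ 2) := by
  simpa using (hasSum_nat_add_iff' (f := fun i : ℕ ↦ (i : 𝕜) * y ^ i) 1).mpr
    (hasSum_coe_mul_geometric_of_norm_lt_one hy)

end Geometric

lemma deriv_riemannZeta_eq_neg_LSeries_logMul {s : ℂ} (hs : 1 < s.re) :
    deriv riemannZeta s = -LSeries (LSeries.logMul 1) s := by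
  have hζ : riemannZeta =ᶠ[nhds s] LSeries 1 :=
    Filter.eventuallyEq_iff_exists_mem.mpr ⟨{z | 1 < z.re},
      (isOpen_lt continuous_const Complex.continuous_re).mem_nhds hs,
      fun _ hz ↦ (LSeries_one_eq_riemannZeta hz).symm⟩
  rw [hζ.deriv_eq, LSeries_deriv (by rw [LSeries.abscissaOfAbsConv_one]; exact_mod_cast hs)]

lemma hasSum_log_div_rpow {σ : ℝ} (hσ : 1 < σ) :
    HasSum (fun n : ℕ ↦ log n / (n : ℝ) ^ σ) (-(deriv riemannZeta σ).re) := by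
  have habs : LSeries.abscissaOfAbsConv 1 < (σ : ℂ).re := by
    rw [LSeries.abscissaOfAbsConv_one]; exact_mod_cast hσ
  have h : HasSum (fun n ↦ (LSeries.term (LSeries.logMul 1) σ n).re)
      (LSeries (LSeries.logMul 1) σ).re :=
    (LSeriesSummable_logMul_of_lt_re habs).hasSum.mapL Complex.reCLM
  rw [deriv_riemannZeta_eq_neg_LSeries_logMul (by simpa using hσ), Complex.neg_re, neg_neg]
  refine h.congr_fun fun n ↦ ?_
  rcases eq_or_ne n 0 with rfl | hn
  · simp
  · rw [LSeries.term_of_ne_zero hn, LSeries.logMul, Pi.one_apply, mul_one,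
      ← Complex.ofReal_natCast, ← Complex.ofReal_log n.cast_nonneg,
      ← Complex.ofReal_cpow n.cast_nonneg, ← Complex.ofReal_div, Complex.ofReal_re]

lemma hasSum_log_succ_add_one_div_succ_sq :
    HasSum (fun j : ℕ ↦ (log ((j : ℝ) + 1) + 1) / ((j : ℝ) + 1) ^ 2)
      (π ^ 2 / 6 - (deriv riemannZeta 2).re) := by
  have hlog := (hasSum_nat_add_iff' (f := fun n : ℕ ↦ log n / (n : ℝ) ^ (2 : ℝ)) 1).mpr
    (hasSum_log_div_rpow one_lt_two)
  have hbasel := (hasSum_nat_add_iff' (f := fun n : ℕ ↦ 1 / (n : ℝ) ^ 2) 1).mpr hasSum_zeta_two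
  have hvalue : π ^ 2 / 6 - (deriv riemannZeta 2).re =
      (-(deriv riemannZeta (2 : ℝ)).re - ∑ i ∈ Finset.range 1, log i / (i : ℝ) ^ (2 : ℝ)) +
        (π ^ 2 / 6 - ∑ i ∈ Finset.range 1, 1 / (i : ℝ) ^ 2) := by
    simp only [Finset.sum_range_one, Nat.cast_zero, log_zero, zero_div, sub_zero,
      Complex.ofReal_ofNat]
    ring
  rw [hvalue]
  refine (hlog.add hbasel).congr_fun fun j ↦ ?_
  push_cast
  rw [rpow_two]
  ring

/-- The `(i + 1, j + 1)` term of `h(n)` with `x` in place of `x(n)`. -/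
noncomputable def knuthYaoTerm (x : ℝ) (i j : ℕ) : ℝ :=
  x ^ ((i + 1) * (j + 1)) / ((j : ℝ) + 1) * log (((j : ℝ) + 1) * (x ^ ((i + 1) * (j + 1)))⁻¹)

section KnuthYaoTerm

variable {x : ℝ}

lemma knuthYaoTerm_eq (hx : 0 < x) (i j : ℕ) :
    knuthYaoTerm x i j =
      (log ((j : ℝ) + 1) / ((j : ℝ) + 1) + ((i : ℝ) + 1) * -log x) * (x ^ (j + 1)) ^ (i + 1) := by
  have hj : (0 : ℝ) < (j : ℝ) + 1 := by positivity
  rw [knuthYaoTerm, log_mul hj.ne' (by positivity), log_inv, log_pow, ← pow_mul]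
  push_cast
  field_simp
  ring

lemma knuthYaoTerm_nonneg (hx : 0 < x) (hx1 : x < 1) (i j : ℕ) : 0 ≤ knuthYaoTerm x i j := by
  have hlog : 0 ≤ log ((j : ℝ) + 1) := log_nonneg (by simp)
  have hlogx : 0 ≤ -log x := by linarith [log_neg hx hx1]
  rw [knuthYaoTerm_eq hx]
  positivity

lemma hasSum_knuthYaoTerm_column (hx : 0 < x) (hx1 : x < 1) (j : ℕ) :
    HasSum (fun i ↦ knuthYaoTerm x i j)
      (log ((j : ℝ) + 1) / ((j : ℝ) + 1) * (x ^ (j + 1) / (1 - x ^ (j + 1))) +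
        -log x * (x ^ (j + 1) / (1 - x ^ (j + 1)) ^ 2)) := by
  have hy : ‖x ^ (j + 1)‖ < 1 := by
    rw [norm_pow, Real.norm_of_nonneg hx.le]
    exact pow_lt_one₀ hx.le hx1 (by omega)
  refine (((hasSum_pow_succ hy).mul_left _).add
    ((hasSum_succ_mul_pow_succ hy).mul_left (-log x))).congr_fun fun i ↦ ?_
  rw [knuthYaoTerm_eq hx]
  ring

lemma tsum_knuthYaoTerm_column_le (hx : 0 < x) (hx1 : x < 1) (j : ℕ) :
    ∑' i, knuthYaoTerm x i j ≤ (log ((j : ℝ) + 1) + 1) / ((j : ℝ) + 1) ^ 2 / -log x := by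
  have ht : 0 < -log x := neg_pos.mpr (log_neg hx hx1)
  have hlog : 0 ≤ log ((j : ℝ) + 1) := log_nonneg (by simp)
  have hr : 0 < ((j : ℝ) + 1) * -log x := by positivity
  have hy : x ^ (j + 1) = exp (-(((j : ℝ) + 1) * -log x)) := by
    rw [show -(((j : ℝ) + 1) * -log x) = ((j + 1 : ℕ) : ℝ) * log x by push_cast; ring,
      exp_nat_mul, exp_log hx]
  rw [(hasSum_knuthYaoTerm_column hx hx1 j).tsum_eq, hy]
  calc _ ≤ log ((j : ℝ) + 1) / ((j : ℝ) + 1) * (((j : ℝ) + 1) * -log x)⁻¹ +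
        -log x * ((((j : ℝ) + 1) * -log x) ^ 2)⁻¹ := by
        gcongr
        · exact exp_neg_div_one_sub_exp_neg_le_inv hr
        · exact exp_neg_div_one_sub_exp_neg_sq_le_inv_sq hr
    _ = _ := by field_simp; ring

theorem tsum_tsum_knuthYaoTerm_le (hx : 0 < x) (hx1 : x < 1) :
    ∑' (i : ℕ) (j : ℕ), knuthYaoTerm x i j ≤ (π ^ 2 / 6 - (deriv riemannZeta 2).re) / -log x := by
  have hbound := hasSum_log_succ_add_one_div_succ_sq.div_const (-log x)
  have hcolumns : Summable fun j ↦ ∑' i, knuthYaoTerm x i j :=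
    hbound.summable.of_nonneg_of_le (fun j ↦ tsum_nonneg fun i ↦ knuthYaoTerm_nonneg hx hx1 i j)
      (tsum_knuthYaoTerm_column_le hx hx1)
  have hsummable : Summable (Function.uncurry (knuthYaoTerm x)) :=
    ((summable_prod_of_nonneg fun p ↦ knuthYaoTerm_nonneg hx hx1 p.2 p.1).mpr
      ⟨fun j ↦ (hasSum_knuthYaoTerm_column hx hx1 j).summable, hcolumns⟩).prod_symm
  rw [← hsummable.tsum_comm, ← hbound.tsum_eq]
  exact hcolumns.tsum_le_tsum (tsum_knuthYaoTerm_column_le hx hx1) hbound.summable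

end KnuthYaoTerm

/-- **Knuth–Yao entropy bound for the Poisson-process proposal.**
With `c = π/√6` and `x = x(n) = exp(−c/√n)`, the entropy-like quantity
`h(n) = Σ_{i,j≥1} (x^{ij}/j)·ln(j·x^{−ij})` satisfies
`h(n) ≤ (c − ζ'(2)/c)·√n`, where `ζ'` is the derivative of the Riemann zeta
function. -/
theorem knuth_yao_entropy_bound (n : ℕ) (hn : 1 ≤ n) :
    ∑' (i : ℕ) (j : ℕ),
        (fristedtX n ^ ((i + 1) * (j + 1)) / ((j : ℝ) + 1)) *
          Real.log (((j : ℝ) + 1) * (fristedtX n ^ ((i + 1) * (j + 1)))⁻¹)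
      ≤ ((Real.pi / Real.sqrt 6) - (deriv riemannZeta 2).re / (Real.pi / Real.sqrt 6)) *
          Real.sqrt n := by
  have hsqrt : 0 < √(n : ℝ) := sqrt_pos.mpr (by exact_mod_cast hn)
  have hlog : -log (fristedtX n) = π / √6 / √n := by rw [fristedtX, log_exp, neg_div, neg_neg]
  have hx1 : fristedtX n < 1 := by
    rw [fristedtX, exp_lt_one_iff, neg_div]
    exact neg_neg_of_pos (by positivity)
  have hc2 : (π / √6) ^ 2 = π ^ 2 / 6 := by rw [div_pow, sq_sqrt (by norm_num)]
  calc _ ≤ (π ^ 2 / 6 - (deriv riemannZeta 2).re) / -log (fristedtX n) :=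
        tsum_tsum_knuthYaoTerm_le (exp_pos _) hx1
    _ = _ := by
      rw [hlog, ← hc2]
      field_simp
end

section
/- As λ → ∞ through positive reals, the largest point probability of the Poisson distribution with mean λ satisfies sup_{k∈ℕ} e^{−λ}·λ^k/k! ∼ 1/√(2πλ); that is, √(2πλ) · sup_{k∈ℕ} e^{−λ}λ^k/k! → 1. -/
/-!
The point probabilities `p k = e^{-λ} λ^k / k!` satisfy `p (k + 1) = p k · λ / (k + 1)`, so they
increase up to `n = ⌊λ⌋` and decrease afterwards: the supremum is `p n`. Stirling's formula
`n! ∼ √(2πn) (n/e)^n` turns `√(2πλ) p n` into `√(λ/n) · e^{n-λ} (λ/n)^n` up to a factor tending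
to `1`. Here `λ/n → 1`, and since `0 ≤ λ - n < 1`, the bounds `1 - 1/y ≤ log y ≤ y - 1` at
`y = λ/n` squeeze `e^{n-λ} (λ/n)^n` between `e^{-1/λ}` and `1`.
-/

open Filter Real Topology Asymptotics
open scoped Nat

theorem Nat.apply_le_of_le_succ_of_succ_le {α : Type*} [Preorder α] {f : ℕ → α} {n : ℕ}
    (hup : ∀ k < n, f k ≤ f (k + 1)) (hdown : ∀ k ≥ n, f (k + 1) ≤ f k) (k : ℕ) :
    f k ≤ f n := by
  rcases le_total k n with hkn | hnk
  · exact monotoneOn_of_le_succ Set.ordConnected_Iic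
      (fun a _ _ ha => hup a (Order.succ_le_iff.mp ha)) hkn (le_refl n) hkn
  · exact antitoneOn_nat_Ici_of_succ_le hdown (le_refl n) hnk hnk

noncomputable def poissonWeight (lam : ℝ) (k : ℕ) : ℝ := exp (-lam) * lam ^ k / k !

theorem poissonWeight_nonneg {lam : ℝ} (hlam : 0 ≤ lam) (k : ℕ) : 0 ≤ poissonWeight lam k := by
  unfold poissonWeight
  positivity

theorem poissonWeight_succ (lam : ℝ) (k : ℕ) :
    poissonWeight lam (k + 1) = poissonWeight lam k * (lam / (k + 1)) := by
  simp only [poissonWeight, Nat.factorial_succ, Nat.cast_mul, Nat.cast_succ]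
  field_simp
  ring

theorem poissonWeight_le_floor {lam : ℝ} (hlam : 0 ≤ lam) (k : ℕ) :
    poissonWeight lam k ≤ poissonWeight lam ⌊lam⌋₊ := by
  refine Nat.apply_le_of_le_succ_of_succ_le (fun j hj => ?_) (fun j hj => ?_) k
  · have hj_lam : (j : ℝ) + 1 ≤ lam := by exact_mod_cast (Nat.le_floor_iff hlam).mp hj
    rw [poissonWeight_succ]
    exact le_mul_of_one_le_right (poissonWeight_nonneg hlam j)
      ((one_le_div (by positivity)).mpr hj_lam)
  · have hlam_j : lam ≤ (j : ℝ) + 1 := by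
      have : (⌊lam⌋₊ : ℝ) ≤ j := by exact_mod_cast hj
      linarith [Nat.lt_floor_add_one lam]
    rw [poissonWeight_succ]
    exact mul_le_of_le_one_right (poissonWeight_nonneg hlam j)
      ((div_le_one (by positivity)).mpr hlam_j)

theorem iSup_poissonWeight {lam : ℝ} (hlam : 0 ≤ lam) :
    ⨆ k, poissonWeight lam k = poissonWeight lam ⌊lam⌋₊ :=
  le_antisymm (ciSup_le (poissonWeight_le_floor hlam))
    (le_ciSup ⟨_, Set.forall_mem_range.mpr (poissonWeight_le_floor hlam)⟩ _)

theorem div_pow_le_exp_sub {x : ℝ} (hx : 0 ≤ x) (n : ℕ) : (x / n) ^ n ≤ exp (x - n) := by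
  rcases n.eq_zero_or_pos with rfl | hn
  · simpa using one_le_exp hx
  calc (x / n) ^ n ≤ exp (x / n - 1) ^ n :=
        pow_le_pow_left₀ (by positivity) (by linarith [add_one_le_exp (x / n - 1)]) n
    _ = exp (x - n) := by
        rw [← exp_nat_mul]
        congr 1
        field_simp

theorem exp_sub_sub_sq_div_le_div_pow {x : ℝ} (hx : 0 < x) {n : ℕ} (hn : 0 < n) :
    exp (x - n - (x - n) ^ 2 / x) ≤ (x / n) ^ n := by
  have hn' : (0 : ℝ) < n := by exact_mod_cast hn
  have hxn : 0 < x / n := by positivity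
  have hlog : (n : ℝ) * (1 - n / x) ≤ n * log (x / n) := by
    have := one_sub_inv_le_log_of_pos hxn
    rw [inv_div] at this
    exact mul_le_mul_of_nonneg_left this hn'.le
  rw [← exp_log (pow_pos hxn n), log_pow, exp_le_exp]
  have : x - n - (x - n) ^ 2 / x = n * (1 - n / x) := by
    field_simp
    ring
  linarith

theorem tendsto_exp_floor_sub_mul_div_floor_pow :
    Tendsto (fun x : ℝ => exp (⌊x⌋₊ - x) * (x / ⌊x⌋₊) ^ ⌊x⌋₊) atTop (𝓝 1) := by
  have hlower : Tendsto (fun x : ℝ => exp (-x⁻¹)) atTop (𝓝 1) := by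
    have := (continuous_exp.tendsto _).comp (tendsto_inv_atTop_zero (𝕜 := ℝ)).neg
    simpa only [neg_zero, exp_zero, Function.comp_def] using this
  refine tendsto_of_tendsto_of_tendsto_of_le_of_le' hlower tendsto_const_nhds ?_ ?_
  · filter_upwards [eventually_ge_atTop 1] with x hx
    have hn : 0 < ⌊x⌋₊ := Nat.floor_pos.mpr hx
    have hfrac : (x - ⌊x⌋₊) ^ 2 ≤ 1 := by
      have := Nat.floor_le (zero_le_one.trans hx)
      nlinarith [Nat.lt_floor_add_one x]
    have hx0 : 0 < x := by linarith
    calc exp (-x⁻¹) ≤ exp (⌊x⌋₊ - x) * exp (x - ⌊x⌋₊ - (x - ⌊x⌋₊) ^ 2 / x) := by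
          rw [← exp_add, exp_le_exp, ← one_div]
          have : (x - ⌊x⌋₊) ^ 2 / x ≤ 1 / x := div_le_div_of_nonneg_right hfrac hx0.le
          linarith
      _ ≤ exp (⌊x⌋₊ - x) * (x / ⌊x⌋₊) ^ ⌊x⌋₊ :=
          mul_le_mul_of_nonneg_left (exp_sub_sub_sq_div_le_div_pow hx0 hn) (exp_pos _).le
  · filter_upwards [eventually_ge_atTop 0] with x hx
    calc exp (⌊x⌋₊ - x) * (x / ⌊x⌋₊) ^ ⌊x⌋₊ ≤ exp (⌊x⌋₊ - x) * exp (x - ⌊x⌋₊) :=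
          mul_le_mul_of_nonneg_left (div_pow_le_exp_sub hx _) (exp_pos _).le
      _ = 1 := by rw [← exp_add, sub_add_sub_cancel, sub_self, exp_zero]

theorem tendsto_sqrt_div_floor : Tendsto (fun x : ℝ => √(x / ⌊x⌋₊)) atTop (𝓝 1) := by
  have hdiv : Tendsto (fun x : ℝ => x / ⌊x⌋₊) atTop (𝓝 1) := by
    simpa only [inv_div, inv_one] using (tendsto_nat_floor_div_atTop (R := ℝ)).inv₀ one_ne_zero
  simpa only [sqrt_one, Function.comp_def] using (continuous_sqrt.tendsto 1).comp hdiv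

theorem sqrt_mul_exp_mul_pow_div_stirling {x : ℝ} (hx : 0 < x) {n : ℕ} (hn : 0 < n) :
    √(2 * π * x) * exp (-x) * x ^ n / (√(2 * n * π) * (n / exp 1) ^ n) =
      √(x / n) * (exp (n - x) * (x / n) ^ n) := by
  have hn' : (0 : ℝ) < n := by exact_mod_cast hn
  have hsqrt : √(2 * π * x) = √(x / n) * √(2 * n * π) := by
    rw [← sqrt_mul (by positivity)]
    congr 1
    field_simp
  rw [hsqrt, div_pow, ← exp_nat_mul, mul_one, exp_sub, div_pow, exp_neg]
  field_simp

theorem tendsto_sqrt_mul_poissonWeight_floor :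
    Tendsto (fun x : ℝ => √(2 * π * x) * poissonWeight x ⌊x⌋₊) atTop (𝓝 1) := by
  have hstirling := Stirling.factorial_isEquivalent_stirling.comp_tendsto
    (tendsto_nat_floor_atTop (α := ℝ))
  have hlimit : Tendsto (fun x : ℝ => √(2 * π * x) * exp (-x) * x ^ ⌊x⌋₊ /
      (√(2 * ⌊x⌋₊ * π) * (⌊x⌋₊ / exp 1) ^ ⌊x⌋₊)) atTop (𝓝 1) := by
    have hfactors := tendsto_sqrt_div_floor.mul tendsto_exp_floor_sub_mul_div_floor_pow
    rw [mul_one] at hfactors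
    refine hfactors.congr' ?_
    filter_upwards [eventually_ge_atTop 1] with x hx
    exact (sqrt_mul_exp_mul_pow_div_stirling (by linarith) (Nat.floor_pos.mpr hx)).symm
  refine ((IsEquivalent.refl.div hstirling).symm.tendsto_nhds hlimit).congr fun x => ?_
  simp only [poissonWeight, Pi.div_apply, Function.comp_apply]
  ring

/-- **Asymptotics of the largest Poisson point probability.**
As `λ → ∞`, `sup_{k∈ℕ} e^{−λ}·λ^k/k! ∼ 1/√(2πλ)`; that is,
`√(2πλ) · sup_k e^{−λ}λ^k/k! → 1`. -/
theorem poisson_max_prob_asymptotics :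
    Tendsto
      (fun lam : ℝ =>
        Real.sqrt (2 * Real.pi * lam) *
          ⨆ k : ℕ, Real.exp (-lam) * lam ^ k / (k.factorial : ℝ))
      atTop (nhds 1) := by
  refine tendsto_sqrt_mul_poissonWeight_floor.congr' ?_
  filter_upwards [eventually_ge_atTop 0] with lam hlam
  rw [← iSup_poissonWeight hlam]
  rfl
end
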